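/- arXiv:1506.05347 — 5 statements merged into one kernel-verified Lean document; each statement's English description precedes it below -/
import Mathlib

section
/- Let f : ℂ → ℂ be a non-constant entire function (differentiable on all of ℂ), and let A ⊆ ℂ be a set such that A ∪ {∞} is connected in the one-point compactification ℂ ∪ {∞}. Then f⁻¹(A) ∪ {∞} is connected in ℂ ∪ {∞}. -/
/-!
If `f⁻¹(A) ∪ {∞}` were disconnected, the piece of `f⁻¹(A)` away from `∞` would be enclosed by a
relatively compact open set `U` with no point of `f⁻¹(A)` on its boundary. By the open mapping
theorem `f(U)` is open, `f(closure U)` is compact, and every point of `A` in `f(closure U)` lies in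
`f(U)`; so `f(U)` and the complement of `f(closure U)` would disconnect `A ∪ {∞}`.
-/

open Set OnePoint

theorem exists_isOpen_isCompact_closure_of_subset_union {X : Type*} [TopologicalSpace X]
    [CompletelyNormalSpace X] [R1Space X] [WeaklyLocallyCompactSpace X] {S u v : Set X}
    (hu : IsOpen u) (hv : IsOpen v) (huc : IsCompact uᶜ) (hS : S ⊆ u ∪ v) (huv : Disjoint (S ∩ u) v) :
    ∃ U, IsOpen U ∧ IsCompact (closure U) ∧ S \ u ⊆ U ∧ S ∩ closure U ⊆ U := by
  have hsep₁ : Disjoint (closure (S \ u)) (S ∩ u) :=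
    (disjoint_compl_left.mono_right inter_subset_right).mono_left
      (closure_minimal (fun _ hx => hx.2) hu.isClosed_compl)
  have hsep₂ : Disjoint (S \ u) (closure (S ∩ u)) :=
    (huv.closure_left hv).symm.mono_left fun _ hx => (hS hx.1).resolve_left hx.2
  -- `S \ u` and `S ∩ u` are only separated, not closed: this is where complete normality enters.
  obtain ⟨U₁, V₁, hU₁, hV₁, hSU₁, hSV₁, hUV⟩ :=
    separatedNhds_iff_disjoint.2 (completely_normal hsep₁ hsep₂)
  obtain ⟨N, hN, huN, hNc⟩ := exists_isOpen_superset_and_isCompact_closure huc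
  refine ⟨U₁ ∩ N, hU₁.inter hN,
    hNc.of_isClosed_subset isClosed_closure (closure_mono inter_subset_right),
    fun x hx => ⟨hSU₁ hx, huN hx.2⟩, ?_⟩
  rintro x ⟨hxS, hxU⟩
  have hxu : x ∉ u := fun hxu =>
    disjoint_left.1 (hUV.closure_left hV₁) (closure_mono inter_subset_left hxU) (hSV₁ ⟨hxS, hxu⟩)
  exact ⟨hSU₁ ⟨hxS, hxu⟩, huN hxu⟩

namespace OnePoint

variable {X : Type*} [TopologicalSpace X]

theorem disjoint_of_isPreconnected_insert_infty {A W C : Set X}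
    (hA : IsPreconnected (insert ∞ ((↑) '' A : Set (OnePoint X))))
    (hW : IsOpen W) (hC : IsCompact C) (hC' : IsClosed C) (hWC : W ⊆ C) (hAC : A ∩ C ⊆ W) :
    Disjoint A W := by
  have hu : IsOpen ((↑) '' C : Set (OnePoint X))ᶜ := isOpen_compl_image_coe.2 ⟨hC', hC⟩
  have hv : IsOpen ((↑) '' W : Set (OnePoint X)) := isOpen_image_coe.2 hW
  have huv : Disjoint ((↑) '' C : Set (OnePoint X))ᶜ ((↑) '' W) :=
    disjoint_compl_left_iff_subset.2 (image_mono hWC)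
  have hcover : insert ∞ ((↑) '' A : Set (OnePoint X)) ⊆ ((↑) '' C)ᶜ ∪ (↑) '' W := by
    rintro _ (rfl | ⟨a, ha, rfl⟩)
    · exact Or.inl infty_notMem_image_coe
    · by_cases haC : a ∈ C
      · exact Or.inr (mem_image_of_mem _ (hAC ⟨ha, haC⟩))
      · exact Or.inl fun ⟨c, hc, hca⟩ => haC (coe_injective hca ▸ hc)
  rcases hA.subset_or_subset hu hv huv hcover with hsub | hsub
  · exact disjoint_left.2 fun a ha haW =>
      hsub (mem_insert_of_mem _ (mem_image_of_mem _ ha)) (mem_image_of_mem _ (hWC haW))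
  · exact absurd (hsub (mem_insert _ _)) infty_notMem_image_coe

theorem isPreconnected_insert_infty_of_forall_disjoint [CompletelyNormalSpace X] [R1Space X]
    [WeaklyLocallyCompactSpace X] {S : Set X}
    (h : ∀ U, IsOpen U → IsCompact (closure U) → S ∩ closure U ⊆ U → Disjoint S U) :
    IsPreconnected (insert ∞ ((↑) '' S : Set (OnePoint X))) := by
  rw [isPreconnected_iff_subset_of_disjoint]
  intro u v hu hv hcover hdisj
  wlog hinf : (∞ : OnePoint X) ∈ u generalizing u v
  · rw [union_comm] at hcover
    rw [inter_comm u v] at hdisj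
    exact (this v u hv hu hcover hdisj ((hcover (mem_insert _ _)).resolve_right hinf)).symm
  obtain ⟨U, hU, hUc, hSU, hSU'⟩ := exists_isOpen_isCompact_closure_of_subset_union
    (S := S) (hu.preimage continuous_coe) (hv.preimage continuous_coe)
    ((isOpen_iff_of_mem' hinf).1 hu).1 (fun z hz => hcover (mem_insert_of_mem _ ⟨z, hz, rfl⟩))
    (disjoint_left.2 fun z hz hzv =>
      hdisj.subset ⟨mem_insert_of_mem _ ⟨z, hz.1, rfl⟩, hz.2, hzv⟩)
  refine Or.inl ?_
  rintro _ (rfl | ⟨z, hz, rfl⟩)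
  · exact hinf
  · by_contra hzu
    exact disjoint_left.1 (h U hU hUc hSU') hz (hSU ⟨hz, hzu⟩)

theorem isPreconnected_insert_infty_preimage [CompletelyNormalSpace X] [R1Space X]
    [WeaklyLocallyCompactSpace X] {Y : Type*} [TopologicalSpace Y] [T2Space Y] {f : X → Y}
    (hf : Continuous f) (hfo : IsOpenMap f) {A : Set Y}
    (hA : IsPreconnected (insert ∞ ((↑) '' A : Set (OnePoint Y)))) :
    IsPreconnected (insert ∞ ((↑) '' (f ⁻¹' A) : Set (OnePoint X))) := by
  refine isPreconnected_insert_infty_of_forall_disjoint fun U hU hUc hSU => ?_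
  have hC : IsCompact (f '' closure U) := hUc.image hf
  have hAC : A ∩ f '' closure U ⊆ f '' U := by
    rintro _ ⟨ha, z, hz, rfl⟩
    exact mem_image_of_mem f (hSU ⟨ha, hz⟩)
  exact ((disjoint_of_isPreconnected_insert_infty hA (hfo U hU) hC hC.isClosed
    (image_mono subset_closure) hAC).preimage f).mono_right (subset_preimage_image f U)

end OnePoint

/-- **Pullbacks of sets connected to infinity are connected to infinity.** If `f` is a
non-constant entire function and `A ∪ {∞}` is connected in the one-point compactification
of `ℂ`, then `f⁻¹(A) ∪ {∞}` is connected as well. -/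
theorem preimage_union_infty_connected (f : ℂ → ℂ) (hf : Differentiable ℂ f)
    (hnc : ¬ ∃ c : ℂ, f = Function.const ℂ c) (A : Set ℂ)
    (hA : IsConnected (insert (∞ : OnePoint ℂ) ((fun z : ℂ => (z : OnePoint ℂ)) '' A))) :
    IsConnected (insert (∞ : OnePoint ℂ) ((fun z : ℂ => (z : OnePoint ℂ)) '' (f ⁻¹' A))) := by
  have hopen : IsOpenMap f :=
    (Complex.analyticOnNhd_univ_iff_differentiable.2 hf).is_constant_or_isOpenMap.resolve_left
      fun ⟨w, hw⟩ => hnc ⟨w, funext hw⟩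
  exact ⟨⟨∞, mem_insert _ _⟩, isPreconnected_insert_infty_preimage hf.continuous hopen hA.2⟩
end

section
/- Let s ∈ ℤ^ℕ and set t_s* = sup_{n ≥ 1} F^{-n}(2π|s_n|), where F^{-n} denotes the n-th iterate of F^{-1}(t) = log(1+t). Then s is exponentially bounded if and only if t_s* < ∞, and in that case t_s* ≤ t_s ≤ t_s* + 1. Moreover, an exponentially bounded address s is fast if and only if t*_{σⁿ(s)} → ∞ as n → ∞. -/
open Set Filter Topology OnePoint

noncomputable section

/-- The space of external addresses: integer sequences `s₀ s₁ s₂ …`. -/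
abbrev Addr : Type := ℕ → ℤ

/-- The one-sided shift on external addresses. -/
def shift (s : Addr) : Addr := fun n => s (n + 1)

/-- The model map `𝓕(t, s) = (F(t) − 2π|s₁|, σ(s))`, where `F(t) = eᵗ − 1`. -/
def Fmodel : ℝ × Addr → ℝ × Addr :=
  fun x => (Real.exp x.1 - 1 - 2 * Real.pi * |(x.2 1 : ℝ)|, shift x.2)

/-- The model Julia set `J(𝓕)`: points whose forward orbit stays in `[0,∞) × ℤ^ℕ`. -/
def JF : Set (ℝ × Addr) := {x | ∀ n : ℕ, 0 ≤ (Fmodel^[n] x).1}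

/-- The model escaping set `I(𝓕)`. -/
def IF : Set (ℝ × Addr) :=
  {x | x ∈ JF ∧ Tendsto (fun n => (Fmodel^[n] x).1) atTop atTop}

/-- An address `s` is exponentially bounded if `(t, s) ∈ J(𝓕)` for some `t`. -/
def ExpBounded (s : Addr) : Prop := ∃ t : ℝ, (t, s) ∈ JF

/-- The minimal potential `t_s = min {t ≥ 0 : (t, s) ∈ J(𝓕)}` of an address `s`. -/
def tmin (s : Addr) : ℝ := sInf {t | (t, s) ∈ JF}

/-- An exponentially bounded address `s` is fast if the endpoint `(t_s, s)` escapes. -/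
def Fast (s : Addr) : Prop := ExpBounded s ∧ (tmin s, s) ∈ IF

/-- The set `Ẽ(𝓕)` of escaping endpoints of the model: the points `(t_s, s)` for fast `s`. -/
def escEndF : Set (ℝ × Addr) := {x | ∃ s : Addr, Fast s ∧ x = (tmin s, s)}

/-- The inverse `F⁻¹(t) = log(1 + t)` of `F(t) = eᵗ − 1`. -/
def Finv (t : ℝ) : ℝ := Real.log (1 + t)

/-- `t_s* = sup_{n ≥ 1} F^{−n}(2π |s_n|) ∈ [0, ∞]`. -/
def tstar (s : Addr) : EReal :=
  ⨆ n : ℕ, ((Finv^[n + 1] (2 * Real.pi * |(s (n + 1) : ℝ)|) : ℝ) : EReal)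

/-! ### Auxiliary lemmas -/

lemma Fmodel_pair (s : Addr) (t : ℝ) :
    Fmodel (t, s) = (Real.exp t - 1 - 2 * Real.pi * |(s 1 : ℝ)|, shift s) := rfl

lemma snd_iter (x : ℝ × Addr) (n : ℕ) : (Fmodel^[n] x).2 = shift^[n] x.2 := by
  induction n generalizing x with
  | zero => rfl
  | succ n ih =>
    rw [Function.iterate_succ_apply, Function.iterate_succ_apply, ih]
    rfl

lemma fst_iter_contMono (n : ℕ) (s : Addr) :
    Continuous (fun t : ℝ => (Fmodel^[n] (t, s)).1) ∧
    Monotone (fun t : ℝ => (Fmodel^[n] (t, s)).1) := by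
  induction n generalizing s with
  | zero => exact ⟨continuous_id, monotone_id⟩
  | succ n ih =>
    have h : (fun t : ℝ => (Fmodel^[n + 1] (t, s)).1)
        = (fun u : ℝ => (Fmodel^[n] (u, shift s)).1) ∘
          (fun t : ℝ => Real.exp t - 1 - 2 * Real.pi * |(s 1 : ℝ)|) := by
      funext t; rw [Function.iterate_succ_apply, Fmodel_pair]; rfl
    obtain ⟨hc, hm⟩ := ih (shift s)
    refine ⟨?_, ?_⟩
    · rw [h]; exact hc.comp (by continuity)
    · rw [h]
      refine hm.comp fun a b hab => ?_
      have := Real.exp_le_exp.2 hab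
      show Real.exp a - 1 - 2 * Real.pi * |(s 1 : ℝ)| ≤ Real.exp b - 1 - 2 * Real.pi * |(s 1 : ℝ)|
      linarith

lemma JF_step {x : ℝ × Addr} (hx : x ∈ JF) : Fmodel x ∈ JF := by
  intro n
  have := hx (n + 1)
  rwa [Function.iterate_succ_apply] at this

lemma JF_iter {x : ℝ × Addr} (hx : x ∈ JF) : ∀ n, Fmodel^[n] x ∈ JF := by
  intro n
  induction n with
  | zero => exact hx
  | succ n ih => rw [Function.iterate_succ_apply']; exact JF_step ih

lemma JF_of_step {x : ℝ × Addr} (h0 : 0 ≤ x.1) (h : Fmodel x ∈ JF) : x ∈ JF := by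
  intro n
  cases n with
  | zero => exact h0
  | succ n => rw [Function.iterate_succ_apply]; exact h n

lemma Finv_nonneg {t : ℝ} (ht : 0 ≤ t) : 0 ≤ Finv t := Real.log_nonneg (by linarith)

lemma Finv_le_iff {x t : ℝ} (hx : 0 ≤ x) : Finv x ≤ t ↔ x ≤ Real.exp t - 1 := by
  unfold Finv
  rw [Real.log_le_iff_le_exp (by linarith)]
  constructor <;> intro <;> linarith

lemma Finv_mono {a b : ℝ} (ha : 0 ≤ a) (hab : a ≤ b) : Finv a ≤ Finv b :=
  Real.log_le_log (by linarith) (by linarith)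

lemma Finv_iter_nonneg {t : ℝ} (ht : 0 ≤ t) : ∀ n, 0 ≤ Finv^[n] t := by
  intro n
  induction n with
  | zero => exact ht
  | succ n ih => rw [Function.iterate_succ_apply']; exact Finv_nonneg ih

lemma pi_abs_nonneg (s : Addr) (k : ℕ) : 0 ≤ 2 * Real.pi * |(s k : ℝ)| := by positivity

lemma key_lb : ∀ (n : ℕ) (s : Addr) (t : ℝ), (t, s) ∈ JF →
    Finv^[n + 1] (2 * Real.pi * |(s (n + 1) : ℝ)|) ≤ t := by
  intro n
  induction n with
  | zero =>
    intro s t ht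
    have h1 : (0 : ℝ) ≤ Real.exp t - 1 - 2 * Real.pi * |(s 1 : ℝ)| := by
      have h0 := ht 1
      rw [Function.iterate_one, Fmodel_pair] at h0
      exact h0
    simp only [zero_add, Function.iterate_one]
    exact (Finv_le_iff (pi_abs_nonneg s 1)).2 (by linarith)
  | succ n ih =>
    intro s t ht
    have hstep : (Real.exp t - 1 - 2 * Real.pi * |(s 1 : ℝ)|, shift s) ∈ JF := by
      rw [← Fmodel_pair]; exact JF_step ht
    have h2 := ih (shift s) _ hstep
    have hsh : ((shift s) (n + 1) : ℝ) = (s (n + 2) : ℝ) := rfl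
    rw [hsh] at h2
    have h3 : Finv^[n + 1] (2 * Real.pi * |(s (n + 2) : ℝ)|) ≤ Real.exp t - 1 := by
      have := pi_abs_nonneg s 1; linarith
    have hnn := Finv_iter_nonneg (pi_abs_nonneg s (n + 2)) (n + 1)
    show Finv^[n + 2] (2 * Real.pi * |(s (n + 2) : ℝ)|) ≤ t
    rw [Function.iterate_succ_apply']
    calc Finv (Finv^[n + 1] (2 * Real.pi * |(s (n + 2) : ℝ)|))
        ≤ Finv (Real.exp t - 1) := Finv_mono hnn h3
      _ = t := by
          unfold Finv
          rw [show (1 : ℝ) + (Real.exp t - 1) = Real.exp t by ring, Real.log_exp]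

lemma tstar_nonneg (s : Addr) : 0 ≤ tstar s := by
  refine le_trans ?_
    (le_iSup (fun n : ℕ => ((Finv^[n + 1] (2 * Real.pi * |(s (n + 1) : ℝ)|) : ℝ) : EReal)) 0)
  exact_mod_cast Finv_iter_nonneg (pi_abs_nonneg s 1) 1

lemma tstar_le_of_JF {s : Addr} {t : ℝ} (h : (t, s) ∈ JF) : tstar s ≤ (t : EReal) :=
  iSup_le fun n => EReal.coe_le_coe_iff.2 (key_lb n s t h)

/-- The real value of `t_s*` (when finite). -/
def trs (s : Addr) : ℝ := (tstar s).toReal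

lemma tstar_eq_coe {s : Addr} (h : tstar s < ⊤) : tstar s = ((trs s : ℝ) : EReal) := by
  refine (EReal.coe_toReal h.ne ?_).symm
  intro hb
  have := tstar_nonneg s
  rw [hb] at this
  exact absurd this (by simp)

lemma trs_nonneg {s : Addr} (h : tstar s < ⊤) : 0 ≤ trs s := by
  have h0 := tstar_nonneg s
  rw [tstar_eq_coe h] at h0
  exact_mod_cast h0

lemma term_le_trs {s : Addr} (h : tstar s < ⊤) (n : ℕ) :
    Finv^[n + 1] (2 * Real.pi * |(s (n + 1) : ℝ)|) ≤ trs s := by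
  have h1 : ((Finv^[n + 1] (2 * Real.pi * |(s (n + 1) : ℝ)|) : ℝ) : EReal) ≤ tstar s :=
    le_iSup (fun n : ℕ => ((Finv^[n + 1] (2 * Real.pi * |(s (n + 1) : ℝ)|) : ℝ) : EReal)) n
  rw [tstar_eq_coe h] at h1
  exact_mod_cast h1

lemma shift_bound {s : Addr} (h : tstar s < ⊤) :
    tstar (shift s) ≤ ((Real.exp (trs s) - 1 : ℝ) : EReal) := by
  refine iSup_le fun m => EReal.coe_le_coe_iff.2 ?_
  have h2 := term_le_trs h (m + 1)
  have hnn := Finv_iter_nonneg (pi_abs_nonneg s (m + 2)) (m + 1)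
  have h3 : Finv (Finv^[m + 1] (2 * Real.pi * |(s (m + 2) : ℝ)|)) ≤ trs s := by
    rw [Function.iterate_succ_apply'] at h2
    exact h2
  have h4 := (Finv_le_iff hnn).1 h3
  show Finv^[m + 1] (2 * Real.pi * |((shift s) (m + 1) : ℝ)|) ≤ Real.exp (trs s) - 1
  rw [show ((shift s) (m + 1) : ℝ) = (s (m + 2) : ℝ) from rfl]
  exact h4

lemma shift_lt_top {s : Addr} (h : tstar s < ⊤) : tstar (shift s) < ⊤ :=
  lt_of_le_of_lt (shift_bound h) (EReal.coe_lt_top _)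

lemma trs_shift_le {s : Addr} (h : tstar s < ⊤) : trs (shift s) ≤ Real.exp (trs s) - 1 := by
  have h1 := shift_bound h
  rw [tstar_eq_coe (shift_lt_top h)] at h1
  exact_mod_cast h1

lemma abs_le_F_trs {s : Addr} (h : tstar s < ⊤) :
    2 * Real.pi * |(s 1 : ℝ)| ≤ Real.exp (trs s) - 1 := by
  have h1 := term_le_trs h 0
  rw [Function.iterate_one] at h1
  exact (Finv_le_iff (pi_abs_nonneg s 1)).1 h1

lemma JF_of_ge : ∀ (n : ℕ) (s : Addr), tstar s < ⊤ → ∀ t : ℝ, trs s + 1 ≤ t →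
    0 ≤ (Fmodel^[n] (t, s)).1 := by
  intro n
  induction n with
  | zero =>
    intro s h t ht
    have := trs_nonneg h
    simp only [Function.iterate_zero, id_eq]
    show (0 : ℝ) ≤ t
    linarith
  | succ n ih =>
    intro s h t ht
    rw [Function.iterate_succ_apply, Fmodel_pair]
    have h' := shift_lt_top h
    refine ih (shift s) h' _ ?_
    have hA := trs_shift_le h
    have hB := abs_le_F_trs h
    have hE : Real.exp (trs s + 1) ≤ Real.exp t := Real.exp_le_exp.2 ht
    have he1 : Real.exp (trs s + 1) = Real.exp (trs s) * Real.exp 1 := Real.exp_add _ _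
    have he2 : (2 : ℝ) ≤ Real.exp 1 := by
      have := Real.exp_one_gt_d9; linarith
    have hpos : 1 ≤ Real.exp (trs s) := Real.one_le_exp (trs_nonneg h)
    have h2E : 2 * Real.exp (trs s) ≤ Real.exp (trs s) * Real.exp 1 := by nlinarith
    have hb0 := pi_abs_nonneg s 1
    linarith

lemma mem_JF_top {s : Addr} (h : tstar s < ⊤) : (trs s + 1, s) ∈ JF :=
  fun n => JF_of_ge n s h _ le_rfl

lemma JF_set_closed (s : Addr) : IsClosed {t : ℝ | (t, s) ∈ JF} := by
  have h : {t : ℝ | (t, s) ∈ JF} = ⋂ n : ℕ, {t : ℝ | 0 ≤ (Fmodel^[n] (t, s)).1} := by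
    ext t
    simp only [Set.mem_iInter, Set.mem_setOf_eq]
    rfl
  rw [h]
  exact isClosed_iInter fun n => isClosed_le continuous_const (fst_iter_contMono n s).1

lemma JF_set_bddBelow (s : Addr) : BddBelow {t : ℝ | (t, s) ∈ JF} := by
  refine ⟨0, fun t ht => ?_⟩
  have := ht 0
  simpa using this

lemma tmin_mem {s : Addr} (h : ExpBounded s) : (tmin s, s) ∈ JF := by
  obtain ⟨t, ht⟩ := h
  exact (JF_set_closed s).csInf_mem ⟨t, ht⟩ (JF_set_bddBelow s)

lemma tmin_le {s : Addr} {t : ℝ} (ht : (t, s) ∈ JF) : tmin s ≤ t :=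
  csInf_le (JF_set_bddBelow s) ht

lemma tmin_nonneg {s : Addr} (h : ExpBounded s) : 0 ≤ tmin s := by
  have := tmin_mem h 0
  simpa using this

lemma step_endpoint {s : Addr} (h : ExpBounded s) :
    ExpBounded (shift s) ∧
      tmin (shift s) = Real.exp (tmin s) - 1 - 2 * Real.pi * |(s 1 : ℝ)| := by
  have hm := tmin_mem h
  have hstep : (Real.exp (tmin s) - 1 - 2 * Real.pi * |(s 1 : ℝ)|, shift s) ∈ JF := by
    rw [← Fmodel_pair]; exact JF_step hm
  have hEB : ExpBounded (shift s) := ⟨_, hstep⟩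
  refine ⟨hEB, le_antisymm (tmin_le hstep) ?_⟩
  have hb0 : 0 ≤ 2 * Real.pi * |(s 1 : ℝ)| := pi_abs_nonneg s 1
  have hm'0 : 0 ≤ tmin (shift s) := tmin_nonneg hEB
  have harg : (0 : ℝ) ≤ tmin (shift s) + 2 * Real.pi * |(s 1 : ℝ)| := by linarith
  have hFt' : Real.exp (Finv (tmin (shift s) + 2 * Real.pi * |(s 1 : ℝ)|)) - 1
      = tmin (shift s) + 2 * Real.pi * |(s 1 : ℝ)| := by
    unfold Finv
    rw [Real.exp_log (by linarith)]
    ring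
  have hx : (Finv (tmin (shift s) + 2 * Real.pi * |(s 1 : ℝ)|), s) ∈ JF := by
    refine JF_of_step (Finv_nonneg harg) ?_
    rw [Fmodel_pair]
    rw [show Real.exp (Finv (tmin (shift s) + 2 * Real.pi * |(s 1 : ℝ)|)) - 1
        - 2 * Real.pi * |(s 1 : ℝ)| = tmin (shift s) by linarith]
    exact tmin_mem hEB
  have h5 := tmin_le hx
  have h6 := Real.exp_le_exp.2 h5
  linarith

lemma iter_endpoint : ∀ (n : ℕ) (s : Addr), ExpBounded s →
    ExpBounded (shift^[n] s) ∧ (Fmodel^[n] (tmin s, s)).1 = tmin (shift^[n] s) := by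
  intro n
  induction n with
  | zero => intro s h; exact ⟨h, rfl⟩
  | succ n ih =>
    intro s h
    obtain ⟨hEB, heq⟩ := step_endpoint h
    have key : Fmodel (tmin s, s) = (tmin (shift s), shift s) := by
      rw [Fmodel_pair, heq]
    rw [Function.iterate_succ_apply, Function.iterate_succ_apply, key]
    exact ih (shift s) hEB

/-- **Bounds for minimal potentials.** `s` is exponentially bounded iff `t_s* < ∞`; in that
case `t_s* ≤ t_s ≤ t_s* + 1`; and an exponentially bounded address `s` is fast iff
`t*_{σⁿ(s)} → ∞`. -/
theorem tstar_bounds (s : Addr) :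
    (ExpBounded s ↔ tstar s < ⊤) ∧
    (ExpBounded s → tstar s ≤ (tmin s : EReal) ∧ (tmin s : EReal) ≤ tstar s + 1) ∧
    (ExpBounded s →
      (Fast s ↔ Tendsto (fun n => tstar (shift^[n] s)) atTop (𝓝 (⊤ : EReal)))) := by
  have part1 : ∀ s' : Addr, ExpBounded s' ↔ tstar s' < ⊤ := by
    intro s'
    constructor
    · rintro ⟨t, ht⟩
      exact lt_of_le_of_lt (tstar_le_of_JF ht) (EReal.coe_lt_top t)
    · intro h
      exact ⟨trs s' + 1, mem_JF_top h⟩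
  refine ⟨part1 s, ?_, ?_⟩
  · intro h
    have htop := (part1 s).1 h
    refine ⟨tstar_le_of_JF (tmin_mem h), ?_⟩
    have h1 : tmin s ≤ trs s + 1 := tmin_le (mem_JF_top htop)
    rw [tstar_eq_coe htop]
    calc (tmin s : EReal) ≤ ((trs s + 1 : ℝ) : EReal) := EReal.coe_le_coe_iff.2 h1
      _ = (trs s : EReal) + 1 := by rw [EReal.coe_add]; norm_num
  · intro hEB
    constructor
    · rintro ⟨_, hJ, hT⟩
      rw [EReal.tendsto_nhds_top_iff_real]
      intro M
      filter_upwards [hT.eventually_ge_atTop (M + 2)] with n hn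
      obtain ⟨hEBn, heq⟩ := iter_endpoint n s hEB
      have htopn := (part1 _).1 hEBn
      have h1 : tmin (shift^[n] s) ≤ trs (shift^[n] s) + 1 := tmin_le (mem_JF_top htopn)
      rw [tstar_eq_coe htopn]
      have h2 : M < trs (shift^[n] s) := by
        rw [heq] at hn
        linarith
      exact_mod_cast h2
    · intro htend
      refine ⟨hEB, tmin_mem hEB, ?_⟩
      rw [EReal.tendsto_nhds_top_iff_real] at htend
      refine tendsto_atTop.2 fun M => ?_
      filter_upwards [htend M] with n hn
      have hmem : ((Fmodel^[n] (tmin s, s)).1, shift^[n] s) ∈ JF := by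
        have hJ := JF_iter (tmin_mem hEB) n
        have h3 : (Fmodel^[n] (tmin s, s)).2 = shift^[n] s := snd_iter (tmin s, s) n
        rw [← h3, Prod.mk.eta]
        exact hJ
      have h4 := tstar_le_of_JF hmem
      have h5 : (M : EReal) < ((Fmodel^[n] (tmin s, s)).1 : EReal) := lt_of_lt_of_le hn h4
      exact le_of_lt (EReal.coe_lt_coe_iff.1 h5)

end
end

section
/- Let x, y ∈ J(𝓕) and n ∈ ℕ, and suppose that |s_j(x)| = |s_j(y)| for j = 1, …, n (where s_j(·) denotes the j-th entry of the address of a point) and that δ := T(𝓕ⁿ(y)) − T(𝓕ⁿ(x)) > 0. Then T(x) ≤ T(y) ≤ T(x) + F^{-n}(δ), where F^{-n} denotes the n-th iterate of F^{-1}(t) = log(1+t). -/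
open Set Filter Topology OnePoint

noncomputable section

lemma Fmodel_iter_snd (z : ℝ × Addr) : ∀ n : ℕ, ∀ j : ℕ, (Fmodel^[n] z).2 j = z.2 (j + n) := by
  intro n
  induction n with
  | zero => intro j; simp
  | succ n ih =>
    intro j
    rw [Function.iterate_succ_apply']
    show shift (Fmodel^[n] z).2 j = _
    rw [shift, ih (j + 1)]
    ring_nf

lemma Fmodel_iter_fst (z : ℝ × Addr) (n : ℕ) :
    (Fmodel^[n + 1] z).1
      = Real.exp (Fmodel^[n] z).1 - 1 - 2 * Real.pi * |((Fmodel^[n] z).2 1 : ℝ)| := by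
  rw [Function.iterate_succ_apply']; rfl

lemma Finv_nonneg_s11 {a : ℝ} (ha : 0 ≤ a) : 0 ≤ Finv a := by
  unfold Finv
  exact Real.log_nonneg (by linarith)

lemma Finv_iter_nonneg_s11 (n : ℕ) {a : ℝ} (ha : 0 ≤ a) : 0 ≤ Finv^[n] a := by
  induction n generalizing a with
  | zero => simpa using ha
  | succ n ih =>
    rw [Function.iterate_succ_apply]
    exact ih (Finv_nonneg_s11 ha)

lemma Finv_iter_mono (n : ℕ) {a b : ℝ} (ha : 0 ≤ a) (hab : a ≤ b) :
    Finv^[n] a ≤ Finv^[n] b := by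
  induction n generalizing a b with
  | zero => simpa using hab
  | succ n ih =>
    rw [Function.iterate_succ_apply, Function.iterate_succ_apply]
    exact ih (Finv_nonneg_s11 ha) (Finv_mono ha hab)

/-- One-step estimate: if `a, b ≥ 0` and `exp b - exp a = δ > 0`, then `0 < b - a ≤ log (1+δ)`. -/
lemma one_step {a b : ℝ} (ha : 0 ≤ a) (hδ : 0 < Real.exp b - Real.exp a) :
    a < b ∧ b - a ≤ Finv (Real.exp b - Real.exp a) := by
  have hab : a < b := by
    by_contra h
    push_neg at h
    have := Real.exp_le_exp.mpr h
    linarith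
  refine ⟨hab, ?_⟩
  unfold Finv
  rw [Real.le_log_iff_exp_le (by linarith)]
  have h1 : Real.exp (b - a) = Real.exp b * Real.exp (-a) := by
    rw [← Real.exp_add]; ring_nf
  have h2 : Real.exp (-a) ≤ 1 := Real.exp_le_one_iff.mpr (by linarith)
  have he : Real.exp a * Real.exp (-a) = 1 := by
    rw [← Real.exp_add]; simp
  have h3 : Real.exp (b - a) - 1 = (Real.exp b - Real.exp a) * Real.exp (-a) := by
    rw [h1, sub_mul]; linarith
  nlinarith [Real.exp_pos (-a)]

/-- **Backwards shrinking.** If `x, y ∈ J(𝓕)` have addresses with equal absolute values of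
the entries `1, …, n`, and `δ = T(𝓕ⁿ(y)) − T(𝓕ⁿ(x)) > 0`, then
`T(x) ≤ T(y) ≤ T(x) + F^{−n}(δ)`. -/
theorem backwards_shrinking (x y : ℝ × Addr) (hx : x ∈ JF) (hy : y ∈ JF) (n : ℕ)
    (habs : ∀ j : ℕ, 1 ≤ j → j ≤ n → |x.2 j| = |y.2 j|)
    (hδ : 0 < (Fmodel^[n] y).1 - (Fmodel^[n] x).1) :
    x.1 ≤ y.1 ∧ y.1 ≤ x.1 + Finv^[n] ((Fmodel^[n] y).1 - (Fmodel^[n] x).1) := by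
  induction n with
  | zero =>
    simp only [Function.iterate_zero, id_eq] at hδ ⊢
    constructor <;> linarith
  | succ n ih =>
    set a := (Fmodel^[n] x).1 with ha_def
    set b := (Fmodel^[n] y).1 with hb_def
    have ha0 : 0 ≤ a := hx n
    have hentry : |((Fmodel^[n] x).2 1 : ℤ)| = |((Fmodel^[n] y).2 1 : ℤ)| := by
      rw [Fmodel_iter_snd x n 1, Fmodel_iter_snd y n 1]
      exact habs (1 + n) (by omega) (by omega)
    have hentryR : |((Fmodel^[n] x).2 1 : ℝ)| = |((Fmodel^[n] y).2 1 : ℝ)| := by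
      rw [← Int.cast_abs, ← Int.cast_abs, hentry]
    have hdiff : (Fmodel^[n + 1] y).1 - (Fmodel^[n + 1] x).1 = Real.exp b - Real.exp a := by
      rw [Fmodel_iter_fst, Fmodel_iter_fst, hentryR]
      ring
    rw [hdiff] at hδ ⊢
    obtain ⟨hab, hle⟩ := one_step ha0 hδ
    have hδ' : 0 < b - a := by linarith
    obtain ⟨h1, h2⟩ := ih (fun j hj hjn => habs j hj (by omega)) hδ'
    refine ⟨h1, ?_⟩
    have : Finv^[n] (b - a) ≤ Finv^[n] (Finv (Real.exp b - Real.exp a)) :=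
      Finv_iter_mono n (le_of_lt hδ') hle
    rw [← Function.iterate_succ_apply] at this
    linarith

end
end

section
/- The point ∞ is an explosion point for Ẽ(𝓕) ∪ {∞}: the set Ẽ(𝓕) ∪ {∞} is a connected subspace of the one-point compactification of ℝ × ℤ^ℕ, and Ẽ(𝓕) is totally separated. -/
open Set Filter Topology OnePoint

noncomputable section

/-!
Distinct escaping endpoints have distinct addresses, so one coordinate of the address separates
them by a clopen set.

For connectedness it suffices that no nonempty clopen subset `A` of `Ẽ(𝓕)` lies in a compact set.
Fix `x₀ ∈ A` and apply Zorn's lemma to chains in `A` through `x₀` whose orbits dominate that of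
`x₀`, and in which a point of larger potential agrees with one of smaller potential on an initial
segment of the address long enough to bound its minimal potential from below. Let `τ` be the
supremum of the potentials on a maximal chain. If `τ` is attained at `z`, the expansion of `𝓕`
lets us change the address of `z` far out into that of an escaping endpoint slightly above `z`,
which stays in `A` because `A` is open in `Ẽ(𝓕)`. Otherwise a limit point of the chain is, by
compatibility and domination, an escaping endpoint of potential `τ`, which lies in `A` because `A`
is closed in `Ẽ(𝓕)`. Either way the chain can be extended.
-/

theorem totallySeparatedSpace_of_injOn_snd {X ι D : Type*} [TopologicalSpace X]
    [TopologicalSpace D] [DiscreteTopology D] {S : Set (X × (ι → D))} (h : InjOn Prod.snd S) :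
    TotallySeparatedSpace S := by
  refine totallySeparatedSpace_iff_exists_isClopen.mpr fun x y hxy => ?_
  obtain ⟨p, hp⟩ : ∃ p, x.1.2 p ≠ y.1.2 p :=
    Function.ne_iff.mp fun he => hxy (Subtype.ext (h x.2 y.2 he))
  have hcont : Continuous fun w : S => w.1.2 p :=
    ((continuous_apply p).comp continuous_snd).comp continuous_subtype_val
  exact ⟨_, (isClopen_discrete {x.1.2 p}).preimage hcont, rfl, hp.symm⟩

theorem OnePoint.isPreconnected_insert_infty_image_coe {X : Type*} [TopologicalSpace X]
    {E : Set X} (h : ∀ B : Set E, IsClopen B → ∀ K, IsCompact K → Subtype.val '' B ⊆ K → B = ∅) :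
    IsPreconnected (insert ∞ ((↑) '' E : Set (OnePoint X))) := by
  rw [isPreconnected_iff_subset_of_disjoint]
  intro u v hu hv hcover hdisj
  wlog hinf : ∞ ∈ u generalizing u v
  · have hinfv : ∞ ∈ v := (hcover (mem_insert _ _)).resolve_left hinf
    exact (this v u hv hu (by rwa [union_comm]) (by rwa [inter_comm v u]) hinfv).symm
  set f : E → OnePoint X := fun x => ((x : X) : OnePoint X)
  have hf : Continuous f := continuous_coe.comp continuous_subtype_val
  have hfS : ∀ x, f x ∈ insert ∞ ((↑) '' E : Set (OnePoint X)) :=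
    fun x => mem_insert_of_mem _ ⟨x, x.2, rfl⟩
  have hv_iff : ∀ x, f x ∈ v ↔ f x ∉ u := fun x =>
    ⟨fun hxv hxu => (hdisj ▸ ⟨hfS x, hxu, hxv⟩ : f x ∈ (∅ : Set (OnePoint X))),
      (hcover (hfS x)).resolve_left⟩
  have hB : IsClopen (f ⁻¹' v) :=
    ⟨(Set.ext hv_iff : f ⁻¹' v = (f ⁻¹' u)ᶜ) ▸ (hu.preimage hf).isClosed_compl, hv.preimage hf⟩
  obtain ⟨-, hK⟩ := (isOpen_iff_of_mem hinf).mp hu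
  have hempty := h _ hB _ hK (by rintro _ ⟨x, hx, rfl⟩; exact (hv_iff x).mp hx)
  refine Or.inl ?_
  rintro w (rfl | ⟨x, hx, rfl⟩)
  · exact hinf
  · by_contra hxu
    exact (eq_empty_iff_forall_notMem.mp hempty) ⟨x, hx⟩ ((hv_iff _).mpr hxu)

namespace EscapingEndpoints

def potential (n : ℕ) (x : ℝ × Addr) : ℝ := (Fmodel^[n] x).1

lemma shift_iterate_apply (s : Addr) (n p : ℕ) : shift^[n] s p = s (p + n) := by
  induction n generalizing s with
  | zero => rfl
  | succ n ih => rw [Function.iterate_succ_apply, ih (shift s), shift, add_assoc]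

lemma Fmodel_iterate_snd (x : ℝ × Addr) (n : ℕ) : (Fmodel^[n] x).2 = shift^[n] x.2 := by
  induction n with
  | zero => rfl
  | succ n ih => rw [Function.iterate_succ_apply', Function.iterate_succ_apply', ← ih]; rfl

lemma Fmodel_iterate_eq (x : ℝ × Addr) (n : ℕ) :
    Fmodel^[n] x = (potential n x, shift^[n] x.2) :=
  Prod.ext rfl (Fmodel_iterate_snd x n)

lemma potential_succ (x : ℝ × Addr) (n : ℕ) :
    potential (n + 1) x = Real.exp (potential n x) - 1 - 2 * Real.pi * |(x.2 (n + 1) : ℝ)| := by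
  rw [potential, Function.iterate_succ_apply', Fmodel_iterate_eq, Fmodel]
  simp only [shift_iterate_apply, add_comm 1 n]

lemma potential_add (x : ℝ × Addr) (m n : ℕ) :
    potential (m + n) x = potential m (potential n x, shift^[n] x.2) := by
  rw [potential, Function.iterate_add_apply, Fmodel_iterate_eq x n]; rfl

lemma potential_congr {x y : ℝ × Addr} (n : ℕ) (h1 : x.1 = y.1)
    (h2 : ∀ p, 1 ≤ p → p ≤ n → x.2 p = y.2 p) : potential n x = potential n y := by
  induction n with
  | zero => exact h1
  | succ n ih =>
    rw [potential_succ, potential_succ, ih fun p hp hpn => h2 p hp (hpn.trans n.le_succ),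
      h2 (n + 1) (Nat.le_add_left 1 n) le_rfl]

lemma potential_mono (s : Addr) (n : ℕ) : Monotone fun t => potential n (t, s) := by
  intro t t' h
  induction n with
  | zero => exact h
  | succ n ih =>
    simp only [potential_succ]
    linarith [Real.exp_le_exp.mpr ih]

lemma continuous_potential (n : ℕ) : Continuous (potential n) := by
  have hF : Continuous Fmodel := by
    refine Continuous.prodMk ?_ (continuous_pi fun i => (continuous_apply (i + 1)).comp
      continuous_snd)
    have h1 : Continuous fun x : ℝ × Addr => ((x.2 1 : ℤ) : ℝ) :=
      continuous_of_discreteTopology.comp ((continuous_apply 1).comp continuous_snd)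
    exact ((Real.continuous_exp.comp continuous_fst).sub continuous_const).sub
      (continuous_const.mul h1.abs)
  exact continuous_fst.comp (hF.iterate n)

lemma mem_JF_iff {x : ℝ × Addr} : x ∈ JF ↔ ∀ n, 0 ≤ potential n x := Iff.rfl

lemma isClosed_JF : IsClosed JF := by
  simp only [JF, ofPred_forall]
  exact isClosed_iInter fun n => isClosed_le continuous_const (continuous_potential n)

lemma Fmodel_iterate_mem_JF {x : ℝ × Addr} (h : x ∈ JF) (n : ℕ) : Fmodel^[n] x ∈ JF := by
  intro m
  rw [← Function.iterate_add_apply]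
  exact h (m + n)

lemma nonneg_of_mem_JF {t : ℝ} {s : Addr} (h : (t, s) ∈ JF) : 0 ≤ t := h 0

lemma log_le_potential {x : ℝ × Addr} (h : x ∈ JF) (n : ℕ) :
    Real.log (1 + 2 * Real.pi * |(x.2 (n + 1) : ℝ)|) ≤ potential n x := by
  have h1 : 0 ≤ potential (n + 1) x := h (n + 1)
  rw [potential_succ] at h1
  rw [← Real.log_exp (potential n x)]
  exact Real.log_le_log (by positivity) (by linarith)

lemma tmin_le {t : ℝ} {s : Addr} (h : (t, s) ∈ JF) : tmin s ≤ t :=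
  csInf_le ⟨0, fun _ ht => nonneg_of_mem_JF ht⟩ h

lemma tmin_mem_JF {s : Addr} (h : ExpBounded s) : (tmin s, s) ∈ JF :=
  (isClosed_JF.preimage (Continuous.prodMk_left s)).csInf_mem h
    ⟨0, fun _ ht => nonneg_of_mem_JF ht⟩

lemma mem_escEndF_iff {x : ℝ × Addr} :
    x ∈ escEndF ↔ x ∈ JF ∧ x.1 = tmin x.2 ∧ Tendsto (potential · x) atTop atTop := by
  constructor
  · rintro ⟨s, ⟨-, hJ, hI⟩, rfl⟩
    exact ⟨hJ, rfl, hI⟩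
  · rintro ⟨hJ, h1, hI⟩
    have hx : x = (tmin x.2, x.2) := Prod.ext h1 rfl
    exact ⟨x.2, ⟨⟨x.1, hJ⟩, hx ▸ hJ, hx ▸ hI⟩, hx⟩

lemma mem_JF_of_mem_escEndF {x : ℝ × Addr} (h : x ∈ escEndF) : x ∈ JF :=
  (mem_escEndF_iff.mp h).1

lemma fst_le_tmin_of_mem_escEndF {x : ℝ × Addr} (h : x ∈ escEndF) : x.1 ≤ tmin x.2 :=
  (mem_escEndF_iff.mp h).2.1.le

lemma injOn_snd_escEndF : InjOn Prod.snd escEndF := by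
  intro x hx y hy h
  exact Prod.ext (by rw [(mem_escEndF_iff.mp hx).2.1, (mem_escEndF_iff.mp hy).2.1, h]) h

lemma mem_escEndF_of_dominates {x₀ x : ℝ × Addr} (hx₀ : x₀ ∈ escEndF) (hx : x ∈ JF)
    (hmin : x.1 ≤ tmin x.2) (hdom : ∀ n, potential n x₀ ≤ potential n x) : x ∈ escEndF :=
  mem_escEndF_iff.mpr ⟨hx, hmin.antisymm (tmin_le (Prod.mk.eta ▸ hx)),
    tendsto_atTop_mono hdom (mem_escEndF_iff.mp hx₀).2.2⟩

/-- `tminApprox n s` is the potential of the point of address `s` whose `n`-th image is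
`(0, σⁿ s)`; `tmin s` is the supremum over `n` of these. -/
def tminApprox : ℕ → Addr → ℝ
  | 0, _ => 0
  | n + 1, s => Real.log (1 + tminApprox n (shift s) + 2 * Real.pi * |(s 1 : ℝ)|)

lemma tminApprox_nonneg (n : ℕ) (s : Addr) : 0 ≤ tminApprox n s := by
  induction n generalizing s with
  | zero => exact le_rfl
  | succ n ih =>
    have h1 := ih (shift s)
    have h2 : 0 ≤ 2 * Real.pi * |(s 1 : ℝ)| := by positivity
    exact Real.log_nonneg (by linarith)

lemma tminApprox_congr {n : ℕ} {s s' : Addr} (h : ∀ p ≤ n, s p = s' p) :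
    tminApprox n s = tminApprox n s' := by
  induction n generalizing s s' with
  | zero => rfl
  | succ n ih =>
    have hshift : tminApprox n (shift s) = tminApprox n (shift s') :=
      ih fun p hp => h (p + 1) (by omega)
    simp only [tminApprox, hshift, h 1 (by omega)]

lemma potential_tminApprox (n : ℕ) (s : Addr) : potential n (tminApprox n s, s) = 0 := by
  induction n generalizing s with
  | zero => rfl
  | succ n ih =>
    have hpos : 0 < 1 + tminApprox n (shift s) + 2 * Real.pi * |(s 1 : ℝ)| := by
      have := tminApprox_nonneg n (shift s); positivity
    have hstep : Fmodel (tminApprox (n + 1) s, s) = (tminApprox n (shift s), shift s) := by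
      simp only [Fmodel, tminApprox, Real.exp_log hpos, Prod.mk.injEq, and_true]
      ring
    rw [potential, Function.iterate_succ_apply, hstep]
    exact ih (shift s)

lemma tminApprox_le_of_mem_JF {x : ℝ × Addr} (h : x ∈ JF) (n : ℕ) : tminApprox n x.2 ≤ x.1 := by
  induction n generalizing x with
  | zero => exact h 0
  | succ n ih =>
    have h1 : tminApprox n (shift x.2) ≤ Real.exp x.1 - 1 - 2 * Real.pi * |(x.2 1 : ℝ)| :=
      ih (Fmodel_iterate_mem_JF h 1)
    rw [tminApprox, ← Real.log_exp x.1]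
    exact Real.log_le_log (by have := tminApprox_nonneg n (shift x.2); positivity) (by linarith)

lemma mem_JF_of_tminApprox_le {t : ℝ} {s : Addr} (h : ∀ n, tminApprox n s ≤ t) :
    (t, s) ∈ JF := fun n =>
  (potential_tminApprox n s).symm.le.trans (potential_mono s n (h n))

lemma exists_tminApprox_ge (s : Addr) {ε : ℝ} (hε : 0 < ε) :
    ∃ N, tmin s - ε ≤ tminApprox N s := by
  by_contra! hlt
  linarith [tmin_le (mem_JF_of_tminApprox_le fun n => (hlt n).le)]

def approxIndex (x : ℝ × Addr) (ε : ℝ) : ℕ := sInf {N | x.1 - ε ≤ tminApprox N x.2}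

lemma approxIndex_spec {x : ℝ × Addr} (hx : x.1 ≤ tmin x.2) {ε : ℝ} (hε : 0 < ε) :
    x.1 - ε ≤ tminApprox (approxIndex x ε) x.2 := by
  refine Nat.sInf_mem (s := {N | x.1 - ε ≤ tminApprox N x.2}) ?_
  obtain ⟨N, hN⟩ := exists_tminApprox_ge x.2 hε
  exact ⟨N, show x.1 - ε ≤ _ by linarith⟩

lemma approxIndex_anti {x : ℝ × Addr} (hx : x.1 ≤ tmin x.2) {ε ε' : ℝ} (hε : 0 < ε)
    (h : ε ≤ ε') : approxIndex x ε' ≤ approxIndex x ε :=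
  Nat.sInf_le (show x.1 - ε' ≤ _ by linarith [approxIndex_spec hx hε])

lemma sub_le_tmin_of_agree {x : ℝ × Addr} (hx : x.1 ≤ tmin x.2) {ε : ℝ} (hε : 0 < ε)
    {s : Addr} (hs : ExpBounded s) (h : ∀ p ≤ approxIndex x ε, s p = x.2 p) :
    x.1 - ε ≤ tmin s := by
  have := tminApprox_le_of_mem_JF (tmin_mem_JF hs) (approxIndex x ε)
  rw [tminApprox_congr h] at this
  linarith [approxIndex_spec hx hε]

def F (t : ℝ) : ℝ := Real.exp t - 1

lemma le_F (t : ℝ) : t ≤ F t := by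
  have := Real.add_one_le_exp t; unfold F; linarith

lemma monotone_F : Monotone F := fun _ _ h => by
  unfold F; linarith [Real.exp_le_exp.mpr h]

lemma le_F_iterate (n : ℕ) (t : ℝ) : t ≤ F^[n] t := by
  induction n with
  | zero => exact le_rfl
  | succ n ih => rw [Function.iterate_succ_apply']; exact ih.trans (le_F _)

lemma exp_sub_exp (a b : ℝ) : Real.exp a - Real.exp b = Real.exp b * F (a - b) := by
  rw [F, mul_sub, ← Real.exp_add]; ring_nf

lemma geom_le_F_iterate {d : ℝ} (hd : 0 < d) (n : ℕ) : d * (1 + d / 2) ^ n ≤ F^[n] d := by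
  induction n with
  | zero => simp
  | succ n ih =>
    set x := F^[n] d
    have hdx : d ≤ x := le_F_iterate n d
    have hx : x * (1 + d / 2) ≤ F x := by
      have := Real.quadratic_le_exp_of_nonneg (hd.le.trans hdx)
      unfold F; nlinarith
    rw [Function.iterate_succ_apply', pow_succ, ← mul_assoc]
    exact (mul_le_mul_of_nonneg_right ih (by linarith)).trans hx

lemma tendsto_F_iterate_atTop {d : ℝ} (hd : 0 < d) : Tendsto (F^[·] d) atTop atTop :=
  tendsto_atTop_mono (geom_le_F_iterate hd)
    ((tendsto_pow_atTop_atTop_of_one_lt (by linarith)).const_mul_atTop hd)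

lemma F_iterate_add_potential_le {t d : ℝ} {s : Addr} (h : (t, s) ∈ JF) (hd : 0 ≤ d)
    (n : ℕ) : F^[n] d + potential n (t, s) ≤ potential n (t + d, s) := by
  induction n with
  | zero => exact (add_comm d t).le
  | succ n ih =>
    set a := potential n (t + d, s)
    set b := potential n (t, s)
    have hFab : F (F^[n] d) ≤ F (a - b) := monotone_F (by linarith)
    have hgap : F (F^[n] d) ≤ Real.exp a - Real.exp b := by
      rw [exp_sub_exp]
      refine hFab.trans (le_mul_of_one_le_left ?_ (Real.one_le_exp (h n)))
      exact (hd.trans (le_F_iterate n d)).trans ((le_F _).trans hFab)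
    rw [Function.iterate_succ_apply', potential_succ, potential_succ]
    linarith

lemma potential_succ_gap {t t' : ℝ} {s : Addr} (h : (t, s) ∈ JF) (ht : t ≤ t') (n : ℕ) :
    (potential (n + 1) (t, s) + 1) * (t' - t) ≤
      potential (n + 1) (t', s) - potential (n + 1) (t, s) := by
  set a := potential n (t', s)
  set b := potential n (t, s)
  have hab : t' - t ≤ a - b := by
    have := F_iterate_add_potential_le h (sub_nonneg.mpr ht) n
    rw [add_sub_cancel] at this
    linarith [le_F_iterate n (t' - t)]
  have hT : potential (n + 1) (t, s) + 1 ≤ Real.exp b := by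
    rw [potential_succ]
    linarith [show 0 ≤ 2 * Real.pi * |(s (n + 1) : ℝ)| by positivity]
  calc (potential (n + 1) (t, s) + 1) * (t' - t) ≤ Real.exp b * F (a - b) :=
        mul_le_mul hT (hab.trans (le_F _)) (sub_nonneg.mpr ht) (Real.exp_pos b).le
    _ = potential (n + 1) (t', s) - potential (n + 1) (t, s) := by
        rw [← exp_sub_exp, potential_succ, potential_succ]; ring

lemma exp_sub_one_add_exp_sub_three_le {v : ℝ} (hv : 3 ≤ v) :
    Real.exp (v - 1) + Real.exp (v - 3) + 2 + 2 * Real.pi ≤ Real.exp v := by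
  have he : Real.exp (v - 1) = Real.exp (v - 3) * Real.exp 1 ^ 2 := by
    rw [← Real.exp_nat_mul, ← Real.exp_add]; ring_nf
  have he' : Real.exp v = Real.exp (v - 3) * Real.exp 1 ^ 3 := by
    rw [← Real.exp_nat_mul, ← Real.exp_add]; ring_nf
  have h1 : 1 ≤ Real.exp (v - 3) := Real.one_le_exp (by linarith)
  have h2 : 11 ≤ Real.exp 1 ^ 3 - Real.exp 1 ^ 2 - 1 := by
    nlinarith [Real.exp_one_gt_d9]
  rw [he, he']
  nlinarith [Real.pi_lt_d2]

/-- The potentials along the address `tailAddr c g` starting from `c`: each entry of the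
address is the largest one that keeps the next potential above `g`. -/
def tailPot (c : ℝ) (g : ℕ → ℝ) : ℕ → ℝ
  | 0 => c
  | j + 1 => Real.exp (tailPot c g j) - 1 -
      2 * Real.pi * ⌊(Real.exp (tailPot c g j) - 1 - g (j + 1)) / (2 * Real.pi)⌋

def tailAddr (c : ℝ) (g : ℕ → ℝ) : Addr
  | 0 => 0
  | j + 1 => ⌊(Real.exp (tailPot c g j) - 1 - g (j + 1)) / (2 * Real.pi)⌋

section Tail

variable {c : ℝ} {g : ℕ → ℝ}

lemma tailPot_succ (j : ℕ) :
    tailPot c g (j + 1) = Real.exp (tailPot c g j) - 1 - 2 * Real.pi * tailAddr c g (j + 1) :=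
  rfl

lemma le_tailPot (hc : g 0 ≤ c) (j : ℕ) : g j ≤ tailPot c g j := by
  cases j with
  | zero => exact hc
  | succ j =>
    have h := mul_le_mul_of_nonneg_left
      (Int.floor_le ((Real.exp (tailPot c g j) - 1 - g (j + 1)) / (2 * Real.pi)))
      Real.two_pi_pos.le
    rw [mul_div_cancel₀ _ Real.two_pi_pos.ne'] at h
    rw [tailPot_succ, tailAddr]
    linarith

variable (hg3 : ∀ j, 3 ≤ g j) (hg : ∀ j, g (j + 1) ≤ Real.exp (g j - 3) + 2) (hc : g 0 ≤ c)
include hg3 hg hc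

lemma exp_tailPot_sub_one_le (j : ℕ) :
    Real.exp (tailPot c g j - 1) ≤ 1 + 2 * Real.pi * tailAddr c g (j + 1) := by
  have hv := le_tailPot hc j
  have h := mul_le_mul_of_nonneg_left
    (Int.sub_one_lt_floor ((Real.exp (tailPot c g j) - 1 - g (j + 1)) / (2 * Real.pi))).le
    Real.two_pi_pos.le
  rw [mul_sub, mul_div_cancel₀ _ Real.two_pi_pos.ne'] at h
  have := exp_sub_one_add_exp_sub_three_le ((hg3 j).trans hv)
  have := Real.exp_le_exp.mpr (show g j - 3 ≤ tailPot c g j - 3 by linarith)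
  rw [tailAddr]
  linarith [hg j]

lemma tailAddr_nonneg (p : ℕ) : 0 ≤ tailAddr c g p := by
  cases p with
  | zero => exact le_rfl
  | succ j =>
    have h := exp_tailPot_sub_one_le hg3 hg hc j
    have : (-1 : ℝ) < tailAddr c g (j + 1) := by
      nlinarith [Real.exp_pos (tailPot c g j - 1), Real.pi_gt_three]
    have : (-1 : ℤ) < tailAddr c g (j + 1) := by exact_mod_cast this
    omega

lemma potential_tailAddr (j : ℕ) : potential j (c, tailAddr c g) = tailPot c g j := by
  induction j with
  | zero => rfl
  | succ j ih =>
    rw [potential_succ, ih, tailPot_succ]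
    dsimp only
    rw [abs_of_nonneg (by exact_mod_cast tailAddr_nonneg hg3 hg hc _)]

end Tail

/-- Large entries of an address force large potentials on all of `J(𝓕)` (`log_le_potential`),
while the orbit of `c` itself is kept just above `γ + 3`. -/
lemma exists_tail {γ : ℕ → ℝ} (hγ0 : ∀ n, 0 ≤ γ n) (hγ : ∀ n, γ (n + 1) ≤ Real.exp (γ n) - 1)
    {c : ℝ} (hc : γ 0 + 3 ≤ c) :
    ∃ r : Addr, (∀ j, γ j + 3 ≤ potential j (c, r)) ∧
      ∀ t, (t, r) ∈ JF → ∀ j, potential j (c, r) - 1 ≤ potential j (t, r) := by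
  set g : ℕ → ℝ := fun j => γ j + 3
  have hg3 : ∀ j, 3 ≤ g j := fun j => by linarith [hγ0 j]
  have hg : ∀ j, g (j + 1) ≤ Real.exp (g j - 3) + 2 := fun j => by
    simp only [g, add_sub_cancel_right]; linarith [hγ j]
  refine ⟨tailAddr c g, fun j => ?_, fun t ht j => ?_⟩
  · rw [potential_tailAddr hg3 hg hc]
    exact le_tailPot (g := g) hc j
  · have hr : (0 : ℝ) ≤ tailAddr c g (j + 1) := by exact_mod_cast tailAddr_nonneg hg3 hg hc _
    have hlog := log_le_potential ht j
    dsimp only at hlog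
    rw [abs_of_nonneg hr] at hlog
    rw [potential_tailAddr hg3 hg hc]
    refine le_trans ?_ hlog
    rw [Real.le_log_iff_exp_le (by nlinarith [Real.pi_pos])]
    exact exp_tailPot_sub_one_le hg3 hg hc j

/-- `σᴺ (splice N s r)` agrees with `r` only from index `1` on, which suffices: index `0` of an
address never enters the orbit. -/
def splice (N : ℕ) (s r : Addr) : Addr := fun p => if p ≤ N then s p else r (p - N)

section Splice

variable {N : ℕ} {s r : Addr}

lemma splice_of_le {p : ℕ} (hp : p ≤ N) : splice N s r p = s p := if_pos hp

lemma potential_splice_of_le (t : ℝ) {n : ℕ} (hn : n ≤ N) :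
    potential n (t, splice N s r) = potential n (t, s) :=
  potential_congr n rfl fun _ _ hp => splice_of_le (hp.trans hn)

lemma potential_splice_add (t : ℝ) (j : ℕ) :
    potential (j + N) (t, splice N s r) = potential j (potential N (t, s), r) := by
  rw [potential_add, potential_splice_of_le t le_rfl]
  refine potential_congr j rfl fun p hp _ => ?_
  show shift^[N] (splice N s r) p = r p
  rw [shift_iterate_apply, splice, if_neg (by omega), Nat.add_sub_cancel]

lemma mem_JF_splice_iff {t : ℝ} :
    (t, splice N s r) ∈ JF ↔ (∀ n ≤ N, 0 ≤ potential n (t, s)) ∧ (potential N (t, s), r) ∈ JF := by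
  simp only [mem_JF_iff]
  constructor
  · intro h
    refine ⟨fun n hn => potential_splice_of_le t hn ▸ h n, fun j => ?_⟩
    rw [← potential_splice_add]
    exact h (j + N)
  · rintro ⟨hle, hr⟩ n
    rcases le_or_gt n N with hn | hn
    · rw [potential_splice_of_le t hn]; exact hle n hn
    · obtain ⟨j, rfl⟩ : ∃ j, n = j + N := ⟨n - N, by omega⟩
      rw [potential_splice_add]; exact hr j

/-- For `t < t' - 1/c`, the expansion of `𝓕` would blow the gap `t' - t` up beyond `1` by time
`N + 1`. -/
lemma sub_inv_le_of_mem_JF_splice {t t' : ℝ} (hpos : 0 < potential (N + 1) (t', s))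
    (hr : ∀ u, (u, r) ∈ JF → potential (N + 1) (t', s) - 1 ≤ u)
    (ht : (t, splice (N + 1) s r) ∈ JF) : t' - 1 / potential (N + 1) (t', s) ≤ t := by
  set c := potential (N + 1) (t', s)
  rcases le_or_gt t' t with h | h
  · linarith [one_div_pos.mpr hpos]
  have hgap := potential_succ_gap ht h.le N
  rw [potential_splice_of_le _ le_rfl, potential_splice_of_le _ le_rfl] at hgap
  have hc : c - 1 ≤ potential (N + 1) (t, s) := hr _ (mem_JF_splice_iff.mp ht).2
  rw [sub_le_comm, le_div_iff₀ hpos]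
  nlinarith

end Splice

/-- Follow the address of `z` up to a late time `N + 1`, then a tail forcing large potentials:
by expansion, the minimal potential of the new address is within `1/c` of `z.1 + θ`, where `c`
is the potential of `(z.1 + θ, z.2)` at time `N + 1`. -/
lemma exists_escEndF_above {x₀ z : ℝ × Addr} (hx₀ : x₀ ∈ escEndF) (hz : z ∈ JF)
    (hdom : ∀ n, potential n x₀ ≤ potential n z) {θ : ℝ} (hθ : 0 < θ) (R : ℕ) :
    ∃ y ∈ escEndF, (∀ p ≤ R, y.2 p = z.2 p) ∧ z.1 + θ / 2 < y.1 ∧ y.1 ≤ z.1 + θ ∧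
      ∀ n, potential n x₀ ≤ potential n y := by
  obtain ⟨τ, s⟩ := z
  have hx₀J : ∀ n, 0 ≤ potential n x₀ := mem_JF_of_mem_escEndF hx₀
  have hx₀succ : ∀ n, potential (n + 1) x₀ ≤ Real.exp (potential n x₀) - 1 := fun n => by
    rw [potential_succ]; linarith [show 0 ≤ 2 * Real.pi * |(x₀.2 (n + 1) : ℝ)| by positivity]
  obtain ⟨N, hFN, hRN⟩ := (((tendsto_F_iterate_atTop hθ).comp (tendsto_add_atTop_nat 1)).eventually
    (eventually_ge_atTop (3 + 2 / θ)) |>.and (eventually_ge_atTop R)).exists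
  set c := potential (N + 1) (τ + θ, s)
  have hc : potential (N + 1) x₀ + 3 + 2 / θ ≤ c := by
    have := F_iterate_add_potential_le hz hθ.le (N + 1)
    dsimp only [Function.comp] at hFN
    linarith [hdom (N + 1)]
  have hθc : 2 / θ < c := by linarith [hx₀J (N + 1)]
  have hcpos : 0 < c := (div_pos two_pos hθ).trans hθc
  obtain ⟨r, hr_above, hr_below⟩ := exists_tail (γ := fun j => potential (j + (N + 1)) x₀)
    (fun j => hx₀J _) (fun j => by simpa only [add_right_comm j 1] using hx₀succ (j + (N + 1)))
    (by simp only [zero_add]; linarith [div_pos two_pos hθ])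
  set s' := splice (N + 1) s r
  have hJ : (τ + θ, s') ∈ JF := mem_JF_splice_iff.mpr
    ⟨fun n _ => (hz n).trans (potential_mono s n (by linarith)),
      fun j => show 0 ≤ potential j (c, r) by linarith [hr_above j, hx₀J (j + (N + 1))]⟩
  have hyJ : (tmin s', s') ∈ JF := tmin_mem_JF ⟨_, hJ⟩
  have hy_gt : τ + θ / 2 < tmin s' := by
    have := sub_inv_le_of_mem_JF_splice hcpos
      (fun u hu => hr_below u hu 0) hyJ
    have : 1 / c < θ / 2 := by
      rw [div_lt_iff₀ hcpos]; rw [div_lt_iff₀ hθ] at hθc; nlinarith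
    linarith
  have hy_dom : ∀ n, potential n x₀ ≤ potential n (tmin s', s') := by
    intro n
    rcases le_or_gt n (N + 1) with hn | hn
    · rw [potential_splice_of_le _ hn]
      exact (hdom n).trans (potential_mono s n (by linarith))
    · obtain ⟨j, rfl⟩ : ∃ j, n = j + (N + 1) := ⟨n - (N + 1), by omega⟩
      rw [potential_splice_add]
      linarith [hr_above j, hr_below _ (mem_JF_splice_iff.mp hyJ).2 j]
  refine ⟨(tmin s', s'), mem_escEndF_of_dominates hx₀ hyJ le_rfl hy_dom,
    fun p hp => splice_of_le (by omega), hy_gt, tmin_le hJ, hy_dom⟩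

/-- `y` agrees with `x` long enough to force `tmin ≥ 2 x.1 - y.1` (see `sub_le_tmin_of_agree`). -/
def Compatible (x y : ℝ × Addr) : Prop := ∀ p ≤ approxIndex x (y.1 - x.1), x.2 p = y.2 p

lemma compatible_of_agree {z y : ℝ × Addr} (hz : z.1 ≤ tmin z.2) {ε : ℝ} (hε : 0 < ε)
    (hyz : ∀ p ≤ approxIndex z ε, y.2 p = z.2 p) (hy : z.1 + ε ≤ y.1) : Compatible z y :=
  fun p hp => (hyz p (hp.trans (approxIndex_anti hz hε (by linarith)))).symm

lemma Compatible.trans_agree {x z y : ℝ × Addr} (hxz : Compatible x z) (hx : x.1 ≤ tmin x.2)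
    (hz : z.1 ≤ tmin z.2) (hlt : x.1 < z.1) {ε : ℝ} (hε : 0 < ε)
    (hyz : ∀ p ≤ approxIndex z ε, y.2 p = z.2 p) (hy : z.1 + ε ≤ y.1) : Compatible x y := by
  have hle : approxIndex x (y.1 - x.1) ≤ min (approxIndex x (z.1 - x.1)) (approxIndex z ε) := by
    have h1 := approxIndex_anti hx (sub_pos.mpr hlt) (show z.1 - x.1 ≤ y.1 - x.1 by linarith)
    rcases le_total (approxIndex z ε) (approxIndex x (z.1 - x.1)) with h | h
    · rw [min_eq_right h]
      refine Nat.sInf_le (show x.1 - (y.1 - x.1) ≤ tminApprox (approxIndex z ε) x.2 from ?_)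
      rw [tminApprox_congr fun p hp => hxz p (hp.trans h)]
      linarith [approxIndex_spec hz hε]
    · rwa [min_eq_left h]
  intro p hp
  have hp' := hp.trans hle
  rw [hxz p (hp'.trans (min_le_left _ _)), hyz p (hp'.trans (min_le_right _ _))]

lemma compatible_of_tendsto {x z : ℝ × Addr} (hx : x.1 ≤ tmin x.2) {xs : ℕ → ℝ × Addr}
    (hlim : Tendsto xs atTop (𝓝 z)) (hxz : x.1 < z.1) (hle : ∀ i, (xs i).1 ≤ z.1)
    (hcomp : ∀ i, x.1 < (xs i).1 → Compatible x (xs i)) : Compatible x z := by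
  intro p hp
  have hcoord : ∀ q, ∀ᶠ i in atTop, (xs i).2 q = z.2 q := fun q => by
    have := (((continuous_apply q).comp continuous_snd).tendsto z).comp hlim
    rwa [nhds_discrete, tendsto_pure] at this
  have hfst : ∀ᶠ i in atTop, x.1 < (xs i).1 :=
    ((continuous_fst.tendsto z).comp hlim).eventually (eventually_gt_nhds hxz)
  obtain ⟨i, hi, hxi⟩ := ((hcoord p).and hfst).exists
  rw [← hi]
  exact hcomp i hxi p (hp.trans (approxIndex_anti hx (by linarith) (by linarith [hle i])))

structure IsGoodChain (x₀ : ℝ × Addr) (A C : Set (ℝ × Addr)) : Prop where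
  subset : C ⊆ A
  base_mem : x₀ ∈ C
  dominates : ∀ x ∈ C, ∀ n, potential n x₀ ≤ potential n x
  injOn_fst : InjOn Prod.fst C
  compatible : ∀ x ∈ C, ∀ y ∈ C, x.1 < y.1 → Compatible x y

section GoodChain

variable {x₀ : ℝ × Addr} {A : Set (ℝ × Addr)}

lemma isGoodChain_singleton (hx₀ : x₀ ∈ A) : IsGoodChain x₀ A {x₀} where
  subset := singleton_subset_iff.mpr hx₀
  base_mem := rfl
  dominates := by rintro x rfl n; exact le_rfl
  injOn_fst := injOn_singleton _ _
  compatible := by rintro x rfl y rfl h; exact absurd h (lt_irrefl _)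

lemma isGoodChain_sUnion {c : Set (Set (ℝ × Addr))} (hc : ∀ C ∈ c, IsGoodChain x₀ A C)
    (hchain : IsChain (· ⊆ ·) c) (hne : c.Nonempty) : IsGoodChain x₀ A (⋃₀ c) where
  subset := sUnion_subset fun C hC => (hc C hC).subset
  base_mem := let ⟨C, hC⟩ := hne; mem_sUnion_of_mem (hc C hC).base_mem hC
  dominates := by
    rintro x ⟨C, hC, hx⟩
    exact (hc C hC).dominates x hx
  injOn_fst := by
    rintro x ⟨C, hC, hx⟩ y ⟨C', hC', hy⟩
    rcases hchain.total hC hC' with h | h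
    · exact (hc C' hC').injOn_fst (h hx) hy
    · exact (hc C hC).injOn_fst hx (h hy)
  compatible := by
    rintro x ⟨C, hC, hx⟩ y ⟨C', hC', hy⟩
    rcases hchain.total hC hC' with h | h
    · exact (hc C' hC').compatible x (h hx) y hy
    · exact (hc C hC).compatible x hx y (h hy)

lemma IsGoodChain.insert {M : Set (ℝ × Addr)} (hM : IsGoodChain x₀ A M) {y : ℝ × Addr}
    (hyA : y ∈ A) (hdom : ∀ n, potential n x₀ ≤ potential n y) (hlt : ∀ x ∈ M, x.1 < y.1)
    (hcomp : ∀ x ∈ M, Compatible x y) : IsGoodChain x₀ A (insert y M) where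
  subset := insert_subset hyA hM.subset
  base_mem := mem_insert_of_mem _ hM.base_mem
  dominates := by
    rintro x (rfl | hx)
    exacts [hdom, hM.dominates x hx]
  injOn_fst := by
    have hyM : y ∉ M := fun hy => (hlt y hy).false
    refine (injOn_insert hyM).mpr ⟨hM.injOn_fst, ?_⟩
    rintro ⟨x, hx, hxy⟩
    exact (hlt x hx).ne hxy
  compatible := by
    rintro x (rfl | hx) w (rfl | hw) h
    · exact absurd h (lt_irrefl _)
    · exact absurd h (hlt w hw).not_gt
    · exact hcomp x hx
    · exact hM.compatible x hx w hw h

end GoodChain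

lemma exists_box_subset {O : Set (ℝ × Addr)} (hO : IsOpen O) {z : ℝ × Addr} (hz : z ∈ O) :
    ∃ δ > 0, ∃ N : ℕ, ∀ x : ℝ × Addr, |x.1 - z.1| < δ → (∀ p ≤ N, x.2 p = z.2 p) → x ∈ O := by
  have hOz := hO.mem_nhds hz
  rw [nhds_prod_eq] at hOz
  obtain ⟨U, hU, V, hV, hUV⟩ := mem_prod_iff.mp hOz
  obtain ⟨δ, hδ, hball⟩ := Metric.mem_nhds_iff.mp hU
  rw [nhds_pi] at hV
  obtain ⟨I, hI, W, hW, hWV⟩ := Filter.mem_pi.mp hV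
  obtain ⟨N, hN⟩ := hI.bddAbove
  refine ⟨δ, hδ, N, fun x hx1 hx2 => hUV ⟨hball hx1, hWV fun i hi => ?_⟩⟩
  rw [hx2 i (hN hi)]
  exact mem_of_mem_nhds (hW i)

section Steps

variable {x₀ : ℝ × Addr} {A M : Set (ℝ × Addr)}

lemma IsGoodChain.exists_extension_of_mem (hM : IsGoodChain x₀ A M) {O : Set (ℝ × Addr)}
    (hO : IsOpen O) (hOA : O ∩ escEndF = A) {z : ℝ × Addr} (hz : z ∈ M)
    (hzmax : ∀ x ∈ M, x.1 ≤ z.1) :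
    ∃ y ∈ A, (∀ n, potential n x₀ ≤ potential n y) ∧ (∀ x ∈ M, x.1 < y.1) ∧
      ∀ x ∈ M, Compatible x y := by
  have hME : M ⊆ escEndF := hM.subset.trans (hOA ▸ inter_subset_right)
  have hfst : ∀ x ∈ M, x.1 ≤ tmin x.2 := fun x hx => fst_le_tmin_of_mem_escEndF (hME hx)
  obtain ⟨δ, hδ, N, hbox⟩ := exists_box_subset hO (hOA ▸ hM.subset hz).1
  set θ := δ / 2
  obtain ⟨y, hyE, hyz, hy_gt, hy_le, hy_dom⟩ :=
    exists_escEndF_above (hME hM.base_mem) (mem_JF_of_mem_escEndF (hME hz)) (hM.dominates z hz)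
      (half_pos hδ) (max N (approxIndex z (θ / 2)))
  have hyA : y ∈ A := hOA ▸ ⟨hbox y (abs_lt.mpr ⟨by linarith, by linarith⟩)
    fun p hp => hyz p (hp.trans (le_max_left _ _)), hyE⟩
  have hagree : ∀ p ≤ approxIndex z (θ / 2), y.2 p = z.2 p :=
    fun p hp => hyz p (hp.trans (le_max_right _ _))
  refine ⟨y, hyA, hy_dom, fun x hx => (hzmax x hx).trans_lt (by linarith), fun x hx => ?_⟩
  rcases (hzmax x hx).lt_or_eq with hlt | heq
  · exact (hM.compatible x hx z hz hlt).trans_agree (hfst x hx) (hfst z hz) hlt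
      (by positivity) hagree hy_gt.le
  · rw [hM.injOn_fst hx hz heq]
    exact compatible_of_agree (hfst z hz) (by positivity) hagree hy_gt.le

lemma IsGoodChain.exists_extension_of_isLUB (hM : IsGoodChain x₀ A M) (hA : A ⊆ escEndF)
    (hclosed : closure A ∩ escEndF ⊆ A) {K : Set (ℝ × Addr)} (hK : IsCompact K) (hAK : A ⊆ K)
    {τ : ℝ} (hτ : IsLUB (Prod.fst '' M) τ) (hlt : ∀ x ∈ M, x.1 < τ) :
    ∃ y ∈ A, (∀ n, potential n x₀ ≤ potential n y) ∧ (∀ x ∈ M, x.1 < y.1) ∧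
      ∀ x ∈ M, Compatible x y := by
  have hfst : ∀ x ∈ M, x.1 ≤ tmin x.2 := fun x hx => fst_le_tmin_of_mem_escEndF (hA (hM.subset hx))
  obtain ⟨u, -, -, hu, huM⟩ := hτ.exists_seq_strictMono_tendsto_of_notMem
    (fun ⟨x, hx, hxτ⟩ => (hlt x hx).ne hxτ) ⟨_, mem_image_of_mem _ hM.base_mem⟩
  choose xs hxsM hxs using huM
  obtain ⟨z, -, φ, hφ, hlim⟩ := hK.tendsto_subseq fun n => hAK (hM.subset (hxsM n))
  obtain rfl : z.1 = τ := tendsto_nhds_unique ((continuous_fst.tendsto z).comp hlim)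
    (by simpa only [Function.comp_def, hxs] using hu.comp hφ.tendsto_atTop)
  have hzJ : z ∈ JF := isClosed_JF.mem_of_tendsto hlim
    (Eventually.of_forall fun i => mem_JF_of_mem_escEndF (hA (hM.subset (hxsM _))))
  have hdom : ∀ n, potential n x₀ ≤ potential n z := fun n =>
    ge_of_tendsto (((continuous_potential n).tendsto z).comp hlim)
      (Eventually.of_forall fun i => hM.dominates _ (hxsM _) n)
  have hcomp : ∀ x ∈ M, Compatible x z := fun x hx =>
    compatible_of_tendsto (hfst x hx) hlim (hlt x hx) (fun i => (hlt _ (hxsM _)).le)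
      fun i h => hM.compatible x hx _ (hxsM _) h
  have hzmin : z.1 ≤ tmin z.2 := by
    have hbound : ∀ x ∈ M, 2 * x.1 - z.1 ≤ tmin z.2 := fun x hx => by
      have := sub_le_tmin_of_agree (hfst x hx) (sub_pos.mpr (hlt x hx)) ⟨z.1, hzJ⟩
        fun p hp => (hcomp x hx p hp).symm
      linarith
    have : z.1 ≤ (tmin z.2 + z.1) / 2 :=
      hτ.2 (by rintro _ ⟨x, hx, rfl⟩; linarith [hbound x hx])
    linarith
  have hzE := mem_escEndF_of_dominates (hA (hM.subset hM.base_mem)) hzJ hzmin hdom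
  refine ⟨z, hclosed ⟨mem_closure_of_tendsto hlim (Eventually.of_forall fun i =>
    hM.subset (hxsM _)), hzE⟩, hdom, hlt, hcomp⟩

end Steps

theorem eq_empty_of_isClopen_of_image_subset_isCompact {B : Set escEndF} (hB : IsClopen B)
    {K : Set (ℝ × Addr)} (hK : IsCompact K) (hBK : Subtype.val '' B ⊆ K) : B = ∅ := by
  set A := Subtype.val '' B
  obtain ⟨O, hO, hOB⟩ := isOpen_induced_iff.mp hB.isOpen
  have hOA : O ∩ escEndF = A := by
    ext x
    refine ⟨fun ⟨hxO, hxE⟩ => ⟨⟨x, hxE⟩, hOB ▸ hxO, rfl⟩, ?_⟩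
    rintro ⟨b, hb, rfl⟩
    exact ⟨(hOB ▸ hb : b ∈ Subtype.val ⁻¹' O), b.2⟩
  have hclosed : closure A ∩ escEndF ⊆ A := fun x ⟨hx, hxE⟩ =>
    ⟨⟨x, hxE⟩, hB.isClosed.closure_subset (closure_subtype.mpr hx), rfl⟩
  refine eq_empty_iff_forall_notMem.mpr fun b hb => ?_
  obtain ⟨M, -, hMmax⟩ := zorn_subset_nonempty {C | IsGoodChain b.1 A C}
    (fun c hc hchain hne => ⟨_, isGoodChain_sUnion hc hchain hne, fun _ => subset_sUnion_of_mem⟩)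
    {b.1} (isGoodChain_singleton ⟨b, hb, rfl⟩)
  have hM : IsGoodChain b.1 A M := hMmax.prop
  have hτ : IsLUB (Prod.fst '' M) (sSup (Prod.fst '' M)) := isLUB_csSup
    ⟨_, mem_image_of_mem _ hM.base_mem⟩
    ((hK.image continuous_fst).bddAbove.mono (image_mono (hM.subset.trans hBK)))
  obtain ⟨y, hyA, hdom, hlt, hcomp⟩ : ∃ y ∈ A, (∀ n, potential n b.1 ≤ potential n y) ∧
      (∀ x ∈ M, x.1 < y.1) ∧ ∀ x ∈ M, Compatible x y := by
    by_cases hattain : ∃ z ∈ M, z.1 = sSup (Prod.fst '' M)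
    · obtain ⟨z, hz, hzτ⟩ := hattain
      exact hM.exists_extension_of_mem hO hOA hz
        fun x hx => hzτ ▸ hτ.1 (mem_image_of_mem _ hx)
    · push Not at hattain
      exact hM.exists_extension_of_isLUB (hOA ▸ inter_subset_right) hclosed hK hBK hτ
        fun x hx => (hτ.1 (mem_image_of_mem _ hx)).lt_of_ne (hattain x hx)
  have := hMmax.2 (hM.insert hyA hdom hlt hcomp) (subset_insert y M) (mem_insert y M)
  exact (hlt y this).false

end EscapingEndpoints

/-- **Escaping endpoints of the model explode.** `Ẽ(𝓕) ∪ {∞}` is connected in the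
one-point compactification of `ℝ × ℤ^ℕ`, and `Ẽ(𝓕)` is totally separated; that is, `∞` is
an explosion point for `Ẽ(𝓕) ∪ {∞}`. -/
theorem model_escaping_endpoints_explode :
    IsConnected (insert (∞ : OnePoint (ℝ × Addr))
      ((fun x : ℝ × Addr => (x : OnePoint (ℝ × Addr))) '' escEndF)) ∧
    TotallySeparatedSpace ↥escEndF :=
  ⟨⟨insert_nonempty _ _, OnePoint.isPreconnected_insert_infty_image_coe fun _ hB _ hK hBK =>
      EscapingEndpoints.eq_empty_of_isClopen_of_image_subset_isCompact hB hK hBK⟩,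
    totallySeparatedSpace_of_injOn_snd EscapingEndpoints.injOn_snd_escEndF⟩

end
end

section
/- Let Q ≥ 0, let J_{≥Q}(𝓕) = {x ∈ J(𝓕) : T(𝓕ʲ(x)) ≥ Q for all j ≥ 0}, and let Ẽ_{≥Q}(𝓕) = Ẽ(𝓕) ∩ J_{≥Q}(𝓕). Then for every x⁰ ∈ J_{≥Q}(𝓕) there are sequences (x^{j+})_{j≥1} and (x^{j−})_{j≥1} in Ẽ_{≥Q}(𝓕) such that the address of x^{j−} is lexicographically smaller than the address of x⁰, the address of x^{j+} is lexicographically greater than the address of x⁰, for all j, and x^{j+} → x⁰ and x^{j−} → x⁰. In particular Ẽ_{≥Q}(𝓕) is dense in J_{≥Q}(𝓕). -/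
open Set Filter Topology OnePoint

noncomputable section

/-- Strict lexicographic order on external addresses. -/
def lexLt (a b : Addr) : Prop := ∃ n : ℕ, (∀ m : ℕ, m < n → a m = b m) ∧ a n < b n

/-- The set `J_{≥Q}(𝓕)` of points whose orbit stays at potential at least `Q`. -/
def JQ (Q : ℝ) : Set (ℝ × Addr) := {x | x ∈ JF ∧ ∀ j : ℕ, Q ≤ (Fmodel^[j] x).1}

namespace EDense

/-- Iterated pullback of the potential `w` along the first `n` entries of `s`. -/
def pullW : ℕ → Addr → ℝ → ℝ
  | 0, _, w => w
  | (n+1), s, w => Finv (2 * Real.pi * |(s 1 : ℝ)| + pullW n (shift s) w)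

/-- Pullback of `0`. -/
def pull (n : ℕ) (s : Addr) : ℝ := pullW n s 0

/-- iterated `x ↦ log (1+x)`. -/
def hIter (n : ℕ) (x : ℝ) : ℝ := (fun y => Real.log (1 + y))^[n] x

lemma pullW_nonneg : ∀ (n : ℕ) (s : Addr) (w : ℝ), 0 ≤ w → 0 ≤ pullW n s w
  | 0, _, _, hw => hw
  | (n+1), s, w, hw => by
      have h := pullW_nonneg n (shift s) w hw
      have h2 : (0:ℝ) ≤ |(s 1 : ℝ)| := abs_nonneg _
      have hpi := Real.pi_pos
      refine Real.log_nonneg (by nlinarith)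

lemma pull_nonneg (n : ℕ) (s : Addr) : 0 ≤ pull n s := pullW_nonneg n s 0 le_rfl

lemma pullW_mono : ∀ (n : ℕ) (s : Addr) {w w' : ℝ}, 0 ≤ w → w ≤ w' →
    pullW n s w ≤ pullW n s w'
  | 0, _, _, _, _, hw' => hw'
  | (n+1), s, w, w', hw, hw' => by
      have h := pullW_mono n (shift s) hw hw'
      have h0 := pullW_nonneg n (shift s) w hw
      have h2 : (0:ℝ) ≤ |(s 1 : ℝ)| := abs_nonneg _
      have hpi := Real.pi_pos
      refine Real.log_le_log (by nlinarith) (by linarith)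

lemma pullW_congr : ∀ (n : ℕ) (s s' : Addr) (w : ℝ),
    (∀ i, 1 ≤ i → i ≤ n → s i = s' i) → pullW n s w = pullW n s' w
  | 0, _, _, _, _ => rfl
  | (n+1), s, s', w, h => by
      have h1 : s 1 = s' 1 := h 1 le_rfl (by omega)
      have h2 : pullW n (shift s) w = pullW n (shift s') w :=
        pullW_congr n (shift s) (shift s') w (fun i hi hi' => h (i+1) (by omega) (by omega))
      simp only [pullW, h1, h2]

lemma pullW_add : ∀ (a b : ℕ) (s : Addr) (w : ℝ),
    pullW (a + b) s w = pullW a s (pullW b (shift^[a] s) w)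
  | 0, b, s, w => by simp [pullW]
  | (a+1), b, s, w => by
      have : a + 1 + b = (a + b) + 1 := by omega
      rw [this]
      show Finv (2 * Real.pi * |(s 1 : ℝ)| + pullW (a+b) (shift s) w) = _
      rw [pullW_add a b (shift s) w]
      rw [Function.iterate_succ_apply]
      rfl
lemma iter_snd : ∀ (n : ℕ) (t : ℝ) (s : Addr), (Fmodel^[n] (t, s)).2 = shift^[n] s
  | 0, _, _ => rfl
  | (n+1), t, s => by
      rw [Function.iterate_succ_apply]
      show (Fmodel^[n] (Real.exp t - 1 - 2 * Real.pi * |(s 1 : ℝ)|, shift s)).2 = _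
      rw [iter_snd n _ (shift s), Function.iterate_succ_apply]

lemma iter_pos_iff : ∀ (n : ℕ) (t : ℝ) (s : Addr),
    0 ≤ (Fmodel^[n] (t, s)).1 ↔ pull n s ≤ t
  | 0, t, s => by simp [pull, pullW]
  | (n+1), t, s => by
      rw [Function.iterate_succ_apply]
      show 0 ≤ (Fmodel^[n] (Real.exp t - 1 - 2 * Real.pi * |(s 1 : ℝ)|, shift s)).1 ↔ _
      rw [iter_pos_iff n _ (shift s)]
      have hp : 0 ≤ pull n (shift s) := pull_nonneg n (shift s)
      have h2 : (0:ℝ) ≤ |(s 1 : ℝ)| := abs_nonneg _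
      have hpi := Real.pi_pos
      show _ ↔ Finv (2 * Real.pi * |(s 1 : ℝ)| + pull n (shift s)) ≤ t
      rw [Finv, Real.log_le_iff_le_exp (by nlinarith)]
      constructor
      · intro h; linarith
      · intro h; linarith

lemma JF_iff (t : ℝ) (s : Addr) : (t, s) ∈ JF ↔ ∀ n, pull n s ≤ t := by
  constructor
  · exact fun h n => (iter_pos_iff n t s).1 (h n)
  · exact fun h n => (iter_pos_iff n t s).2 (h n)

lemma JF_iterate {x : ℝ × Addr} (hx : x ∈ JF) (k : ℕ) : Fmodel^[k] x ∈ JF := by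
  intro n
  rw [← Function.iterate_add_apply]
  exact hx (n + k)

lemma pullW_orbit : ∀ (n : ℕ) (t : ℝ) (s : Addr),
    pullW n s ((Fmodel^[n] (t, s)).1) = t
  | 0, _, _ => rfl
  | (n+1), t, s => by
      rw [Function.iterate_succ_apply]
      show Finv (2 * Real.pi * |(s 1 : ℝ)| +
        pullW n (shift s) ((Fmodel^[n] (Real.exp t - 1 - 2 * Real.pi * |(s 1 : ℝ)|, shift s)).1)) = t
      rw [pullW_orbit n _ (shift s), Finv]
      have : 1 + (2 * Real.pi * |(s 1 : ℝ)| + (Real.exp t - 1 - 2 * Real.pi * |(s 1 : ℝ)|))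
          = Real.exp t := by ring
      rw [this, Real.log_exp]

lemma hIter_nonneg (n : ℕ) {x : ℝ} (hx : 0 ≤ x) : 0 ≤ hIter n x := by
  induction n generalizing x with
  | zero => exact hx
  | succ n ih =>
      rw [hIter, Function.iterate_succ_apply']
      have := ih hx
      rw [hIter] at this
      exact Real.log_nonneg (by linarith)

lemma JF_fst_nonneg {x : ℝ × Addr} (hx : x ∈ JF) : 0 ≤ x.1 := hx 0

lemma JF_step {t : ℝ} {s : Addr} (hx : (t, s) ∈ JF) :
    (Real.exp t - 1 - 2 * Real.pi * |(s 1 : ℝ)|, shift s) ∈ JF := by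
  intro n
  have := hx (n + 1)
  rw [Function.iterate_add_apply] at this
  exact this

lemma pullW_le_of_JF : ∀ (n : ℕ) (t : ℝ) (s : Addr), (t, s) ∈ JF → ∀ δ : ℝ, 0 ≤ δ →
    pullW n s ((Fmodel^[n] (t, s)).1 + δ) ≤ t + hIter n δ
  | 0, t, s, _, δ, _ => le_of_eq rfl
  | (n+1), t, s, hJF, δ, hδ => by
      rw [Function.iterate_succ_apply]
      have ht : 0 ≤ t := hJF 0
      set t1 := Real.exp t - 1 - 2 * Real.pi * |(s 1 : ℝ)| with ht1
      have hJF1 : (t1, shift s) ∈ JF := JF_step hJF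
      have ih := pullW_le_of_JF n t1 (shift s) hJF1 δ hδ
      have hu : 0 ≤ (Fmodel^[n] (t1, shift s)).1 := hJF1 n
      have hh : 0 ≤ hIter n δ := hIter_nonneg n hδ
      show Finv (2 * Real.pi * |(s 1 : ℝ)| +
        pullW n (shift s) ((Fmodel^[n] (t1, shift s)).1 + δ)) ≤ t + hIter (n+1) δ
      have h2 : (0:ℝ) ≤ |(s 1 : ℝ)| := abs_nonneg _
      have hpi := Real.pi_pos
      have hnn : 0 ≤ pullW n (shift s) ((Fmodel^[n] (t1, shift s)).1 + δ) :=
        pullW_nonneg _ _ _ (by linarith)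
      have step1 : Finv (2 * Real.pi * |(s 1 : ℝ)| +
          pullW n (shift s) ((Fmodel^[n] (t1, shift s)).1 + δ)) ≤
          Real.log (Real.exp t + hIter n δ) := by
        rw [Finv]
        apply Real.log_le_log (by nlinarith)
        have : 1 + (2 * Real.pi * |(s 1 : ℝ)| + (t1 + hIter n δ)) = Real.exp t + hIter n δ := by
          rw [ht1]; ring
        linarith [this ▸ (by linarith [ih] : (1:ℝ) + (2 * Real.pi * |(s 1 : ℝ)| +
          pullW n (shift s) ((Fmodel^[n] (t1, shift s)).1 + δ)) ≤
          1 + (2 * Real.pi * |(s 1 : ℝ)| + (t1 + hIter n δ)))]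
      have hexp1 : (1:ℝ) ≤ Real.exp t := Real.one_le_exp ht
      have step2 : Real.log (Real.exp t + hIter n δ) ≤ t + Real.log (1 + hIter n δ) := by
        have : Real.exp t + hIter n δ ≤ Real.exp t * (1 + hIter n δ) := by nlinarith
        calc Real.log (Real.exp t + hIter n δ) ≤ Real.log (Real.exp t * (1 + hIter n δ)) :=
              Real.log_le_log (by positivity) this
          _ = t + Real.log (1 + hIter n δ) := by
              rw [Real.log_mul (by positivity) (by positivity), Real.log_exp]
      have : hIter (n+1) δ = Real.log (1 + hIter n δ) := by
        rw [hIter, Function.iterate_succ_apply']; rfl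
      rw [this]
      exact le_trans step1 step2

lemma hIter_tendsto {c : ℝ} (hc : 0 ≤ c) :
    Tendsto (fun n => hIter n c) atTop (𝓝 0) := by
  have hmono : ∀ n, hIter (n+1) c ≤ hIter n c := by
    intro n
    rw [hIter, Function.iterate_succ_apply']
    have h := hIter_nonneg n hc
    rw [hIter] at h ⊢
    calc Real.log (1 + (fun y => Real.log (1 + y))^[n] c)
        ≤ (1 + (fun y => Real.log (1 + y))^[n] c) - 1 :=
          Real.log_le_sub_one_of_pos (by linarith)
      _ = _ := by ring
  have hanti : Antitone (fun n => hIter n c) :=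
    antitone_nat_of_succ_le hmono
  have hbdd : BddBelow (Set.range fun n => hIter n c) :=
    ⟨0, by rintro y ⟨n, rfl⟩; exact hIter_nonneg n hc⟩
  have hlim := tendsto_atTop_ciInf hanti hbdd
  set L := ⨅ n, hIter n c with hL
  have hL0 : 0 ≤ L := le_ciInf (fun n => hIter_nonneg n hc)
  have hshift : Tendsto (fun n => hIter (n+1) c) atTop (𝓝 L) :=
    hlim.comp (tendsto_add_atTop_nat 1)
  have hcont : Tendsto (fun n => Real.log (1 + hIter n c)) atTop (𝓝 (Real.log (1 + L))) := by
    have : ContinuousAt (fun y => Real.log (1 + y)) L := by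
      apply Real.continuousAt_log (by linarith) |>.comp
      exact (continuous_const.add continuous_id).continuousAt
    exact this.tendsto.comp hlim
  have heq : ∀ n, hIter (n+1) c = Real.log (1 + hIter n c) := by
    intro n; rw [hIter, Function.iterate_succ_apply']; rfl
  have : Real.log (1 + L) = L := by
    exact (tendsto_nhds_unique (hshift.congr heq) hcont).symm
  have hLz : L = 0 := by
    by_contra hne
    have hLpos : 0 < L := lt_of_le_of_ne hL0 (Ne.symm hne)
    have : Real.log (1 + L) < L := by
      have h1 : (1:ℝ) + L < Real.exp L := by
        have := Real.add_one_lt_exp (ne_of_gt hLpos)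
        linarith
      calc Real.log (1 + L) < Real.log (Real.exp L) :=
            Real.log_lt_log (by linarith) h1
        _ = L := Real.log_exp L
    linarith
  rw [← hLz]
  exact hlim
lemma exp_big {y : ℝ} (hy : 4 ≤ y) : y + 5 ≤ Real.exp y := by
  have h1 : y/2 + 1 ≤ Real.exp (y/2) := Real.add_one_le_exp (y/2)
  have h2 : Real.exp y = Real.exp (y/2) * Real.exp (y/2) := by
    rw [← Real.exp_add]; ring_nf
  nlinarith

lemma log_two_le_one : Real.log 2 ≤ 1 := by
  rw [Real.log_le_iff_le_exp (by norm_num)]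
  have := Real.exp_one_gt_d9
  norm_num at this ⊢
  linarith

lemma one_add_two_pi_le : (1:ℝ) + 2 * Real.pi ≤ Real.exp 2 := by
  have hpi : Real.pi < 3.141593 := Real.pi_lt_d6
  have he : Real.exp 1 > 2.7182818283 := Real.exp_one_gt_d9
  have h2 : Real.exp 2 = Real.exp 1 * Real.exp 1 := by
    rw [← Real.exp_add]; norm_num
  nlinarith

lemma exists_K (θ : ℝ) : ∃ K : ℕ, θ ≤ Real.log (1 + 2 * Real.pi * K) := by
  obtain ⟨K, hK⟩ := exists_nat_ge (Real.exp θ)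
  refine ⟨K, ?_⟩
  rw [← Real.log_exp θ]
  apply Real.log_le_log (Real.exp_pos θ)
  have hpi := Real.pi_gt_three
  have hK0 : (0:ℝ) ≤ K := Nat.cast_nonneg K
  nlinarith

def Kf (θ : ℝ) : ℕ := Nat.find (exists_K θ)

lemma Kf_spec (θ : ℝ) : θ ≤ Real.log (1 + 2 * Real.pi * Kf θ) := Nat.find_spec (exists_K θ)

lemma Kf_le {θ : ℝ} (hθ : 0 ≤ θ) : Real.log (1 + 2 * Real.pi * Kf θ) ≤ θ + 2 := by
  have hpi := Real.pi_gt_three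
  rcases Nat.eq_zero_or_pos (Kf θ) with h0 | hpos
  · rw [h0]
    simp
    linarith
  · have hmin : ¬ (θ ≤ Real.log (1 + 2 * Real.pi * (Kf θ - 1 : ℕ))) :=
      Nat.find_min (exists_K θ) (Nat.sub_lt hpos one_pos)
    push_neg at hmin
    have hcast : ((Kf θ - 1 : ℕ) : ℝ) = (Kf θ : ℝ) - 1 := by
      have : (1:ℕ) ≤ Kf θ := hpos
      push_cast [Nat.cast_sub this]
      ring
    rw [hcast] at hmin
    have hKpos : (1:ℝ) ≤ (Kf θ : ℝ) := by exact_mod_cast hpos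
    have harg : (0:ℝ) < 1 + 2 * Real.pi * ((Kf θ : ℝ) - 1) := by nlinarith
    have hlt : 1 + 2 * Real.pi * ((Kf θ : ℝ) - 1) < Real.exp θ := by
      rwa [Real.log_lt_iff_lt_exp harg] at hmin
    have hle : 1 + 2 * Real.pi * (Kf θ : ℝ) < Real.exp θ + 2 * Real.pi := by linarith
    have hexpθ : (1:ℝ) ≤ Real.exp θ := Real.one_le_exp hθ
    have : 1 + 2 * Real.pi * (Kf θ : ℝ) ≤ Real.exp θ * Real.exp 2 := by
      have h2pi := one_add_two_pi_le
      nlinarith [Real.exp_pos θ]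
    calc Real.log (1 + 2 * Real.pi * (Kf θ : ℝ)) ≤ Real.log (Real.exp θ * Real.exp 2) :=
          Real.log_le_log (by nlinarith) this
      _ = θ + 2 := by rw [← Real.exp_add, Real.log_exp]
lemma endpoint_spec (s : Addr) (b : ℝ) (hb : ∀ n, pull n s ≤ b) :
    (tmin s, s) ∈ JF ∧ (∀ n, pull n s ≤ tmin s) ∧ tmin s ≤ b := by
  set R := Set.range (fun n => pull n s) with hR
  have hne : R.Nonempty := ⟨pull 0 s, 0, rfl⟩
  have hbdd : BddAbove R := ⟨b, by rintro y ⟨n, rfl⟩; exact hb n⟩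
  have hlub : IsLUB R (sSup R) := isLUB_csSup hne hbdd
  have hset : {t | (t, s) ∈ JF} = upperBounds R := by
    ext t
    simp only [Set.mem_setOf_eq, JF_iff, upperBounds, Set.mem_range, hR]
    constructor
    · rintro h y ⟨n, rfl⟩; exact h n
    · intro h n; exact h ⟨n, rfl⟩
  have htm : tmin s = sSup R := by
    rw [tmin, hset]
    exact IsLeast.csInf_eq hlub
  refine ⟨?_, ?_, ?_⟩
  · rw [JF_iff]
    intro n
    rw [htm]
    exact le_csSup hbdd ⟨n, rfl⟩
  · intro n
    rw [htm]
    exact le_csSup hbdd ⟨n, rfl⟩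
  · rw [htm]
    exact csSup_le hne (by rintro y ⟨n, rfl⟩; exact hb n)

lemma iter_mono : ∀ (n : ℕ) (t t' : ℝ) (s : Addr), t ≤ t' →
    (Fmodel^[n] (t, s)).1 ≤ (Fmodel^[n] (t', s)).1
  | 0, _, _, _, h => h
  | (n+1), t, t', s, h => by
      rw [Function.iterate_succ_apply, Function.iterate_succ_apply]
      show (Fmodel^[n] (Real.exp t - 1 - 2 * Real.pi * |(s 1 : ℝ)|, shift s)).1 ≤
        (Fmodel^[n] (Real.exp t' - 1 - 2 * Real.pi * |(s 1 : ℝ)|, shift s)).1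
      exact iter_mono n _ _ (shift s) (by have := Real.exp_le_exp.2 h; linarith)

lemma iter_congr : ∀ (n : ℕ) (t : ℝ) (s s' : Addr), (∀ i, 1 ≤ i → i ≤ n → s i = s' i) →
    (Fmodel^[n] (t, s)).1 = (Fmodel^[n] (t, s')).1
  | 0, _, _, _, _ => rfl
  | (n+1), t, s, s', h => by
      rw [Function.iterate_succ_apply, Function.iterate_succ_apply]
      have h1 : s 1 = s' 1 := h 1 le_rfl (by omega)
      show (Fmodel^[n] (Real.exp t - 1 - 2 * Real.pi * |(s 1 : ℝ)|, shift s)).1 =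
        (Fmodel^[n] (Real.exp t - 1 - 2 * Real.pi * |(s' 1 : ℝ)|, shift s')).1
      rw [h1]
      exact iter_congr n _ (shift s) (shift s')
        (fun i hi hi' => h (i+1) (by omega) (by omega))
lemma shift_iter_apply : ∀ (q : ℕ) (s : Addr) (i : ℕ), (shift^[q] s) i = s (i + q)
  | 0, _, _ => rfl
  | (q+1), s, i => by
      rw [Function.iterate_succ_apply, shift_iter_apply q (shift s) i]
      rfl

def thet (A L : ℝ) (m : ℕ) : ℝ := max (A + 2*m + 3) L

def cval (A L : ℝ) (m : ℕ) : ℝ := Real.log (1 + 2 * Real.pi * (Kf (thet A L m) : ℝ))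

def newAddr (s : Addr) (A L : ℝ) (j : ℕ) (ε : ℤ) : Addr :=
  fun i => if i ≤ j then s i else ε * (Kf (thet A L (i - j)) : ℤ)

variable {A L : ℝ}

lemma thet_ge (hA : 0 ≤ A) (m : ℕ) : A + 2*m + 3 ≤ thet A L m := le_max_left _ _

lemma thet_nonneg (hA : 0 ≤ A) (m : ℕ) : 0 ≤ thet A L m := by
  have h := thet_ge (L := L) hA m
  have h2 : (0:ℝ) ≤ 2*m := by positivity
  linarith

lemma thet_succ_le (m : ℕ) : thet A L (m+1) ≤ thet A L m + 2 := by
  rw [thet, thet]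
  apply max_le
  · push_cast
    calc A + 2*((m:ℝ)+1) + 3 = (A + 2*m + 3) + 2 := by ring
      _ ≤ _ := by gcongr; exact le_max_left _ _
  · calc L ≤ max (A + 2*m + 3) L := le_max_right _ _
      _ ≤ _ := by linarith

lemma cval_ge (m : ℕ) : thet A L m ≤ cval A L m := Kf_spec _

lemma cval_le (hA : 0 ≤ A) (m : ℕ) : cval A L m ≤ thet A L m + 2 :=
  Kf_le (thet_nonneg hA m)

lemma cval_nonneg (hA : 0 ≤ A) (m : ℕ) : 0 ≤ cval A L m :=
  (thet_nonneg hA m).trans (cval_ge m)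

lemma abs_eps_mul {ε : ℤ} (hε : ε = 1 ∨ ε = -1) (K : ℕ) :
    |((ε * (K : ℤ) : ℤ) : ℝ)| = (K : ℝ) := by
  rcases hε with h | h <;> subst h <;> push_cast <;> simp

lemma exp_cval (hA : 0 ≤ A) (m : ℕ) :
    Real.exp (cval A L m) = 1 + 2 * Real.pi * (Kf (thet A L m) : ℝ) := by
  rw [cval, Real.exp_log]
  have hpi := Real.pi_pos
  have : (0:ℝ) ≤ (Kf (thet A L m) : ℝ) := Nat.cast_nonneg _
  nlinarith

lemma tail_pull {s : Addr} {j : ℕ} {ε : ℤ} (hA : 0 ≤ A) (hL : 0 ≤ L)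
    (hε : ε = 1 ∨ ε = -1) :
    ∀ (m p : ℕ), pull m (shift^[j + p] (newAddr s A L j ε)) ≤ cval A L (p+1) + 1
  | 0, p => by
      have := cval_nonneg (L := L) hA (p+1)
      rw [pull]
      show (0:ℝ) ≤ _
      linarith
  | (m+1), p => by
      set s' := newAddr s A L j ε with hs'
      have hX1 : (shift^[j + p] s') 1 = ε * (Kf (thet A L (p+1)) : ℤ) := by
        rw [shift_iter_apply]
        show s' (1 + (j + p)) = _
        rw [hs', newAddr]
        have h1 : ¬ (1 + (j + p) ≤ j) := by omega
        rw [if_neg h1]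
        have h2 : 1 + (j + p) - j = p + 1 := by omega
        rw [h2]
      have hshiftX : shift (shift^[j + p] s') = shift^[j + (p+1)] s' :=
        (Function.iterate_succ_apply' shift (j+p) s').symm
      have ih : pull m (shift^[j + (p+1)] s') ≤ cval A L (p+2) + 1 :=
        tail_pull hA hL hε m (p+1)
      have ihnn : 0 ≤ pull m (shift^[j + (p+1)] s') := pull_nonneg _ _
      show Finv (2 * Real.pi * |((shift^[j+p] s') 1 : ℝ)| +
        pullW m (shift (shift^[j+p] s')) 0) ≤ cval A L (p+1) + 1
      rw [hX1, hshiftX, abs_eps_mul hε]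
      set y := cval A L (p+1) with hy
      set w := pullW m (shift^[j + (p+1)] s') 0 with hw
      have hwle : w ≤ cval A L (p+2) + 1 := ih
      have hwnn : 0 ≤ w := ihnn
      have hey : Real.exp y = 1 + 2 * Real.pi * (Kf (thet A L (p+1)) : ℝ) := exp_cval hA _
      have hyge : A + 2*((p+1:ℕ):ℝ) + 3 ≤ y :=
        (thet_ge hA (p+1)).trans (cval_ge (A := A) (L := L) (p+1))
      have hy5 : 5 ≤ y := by
        have hp : (0:ℝ) ≤ (p:ℝ) := Nat.cast_nonneg p
        push_cast at hyge
        linarith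
      have hc2 : cval A L (p+2) ≤ y + 4 := by
        calc cval A L (p+2) ≤ thet A L (p+2) + 2 := cval_le hA _
          _ ≤ thet A L (p+1) + 4 := by linarith [thet_succ_le (A := A) (L := L) (p+1)]
          _ ≤ y + 4 := by linarith [cval_ge (A := A) (L := L) (p+1)]
      have hbig : y + 5 ≤ Real.exp y := exp_big (by linarith)
      have harg : 2 * Real.pi * (Kf (thet A L (p+1)) : ℝ) + w ≤ 2 * Real.exp y - 1 := by
        have : 1 + 2 * Real.pi * (Kf (thet A L (p+1)) : ℝ) + w = Real.exp y + w := by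
          rw [hey]
        nlinarith [hwle, hc2, hbig]
      rw [Finv]
      calc Real.log (1 + (2 * Real.pi * (Kf (thet A L (p+1)) : ℝ) + w))
          ≤ Real.log (2 * Real.exp y) := by
            apply Real.log_le_log
            · have hpi := Real.pi_pos
              have : (0:ℝ) ≤ (Kf (thet A L (p+1)) : ℝ) := Nat.cast_nonneg _
              nlinarith
            · linarith
        _ = Real.log 2 + y := by
            rw [Real.log_mul (by norm_num) (Real.exp_ne_zero y), Real.log_exp]
        _ ≤ y + 1 := by linarith [log_two_le_one]
lemma pull_one_shift {s : Addr} {A L : ℝ} {j q : ℕ} {ε : ℤ} (hε : ε = 1 ∨ ε = -1)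
    (hq : j < 1 + q) :
    pull 1 (shift^[q] (newAddr s A L j ε)) = cval A L (1 + q - j) := by
  show Finv (2 * Real.pi * |((shift^[q] (newAddr s A L j ε)) 1 : ℝ)| +
    pullW 0 (shift (shift^[q] (newAddr s A L j ε))) 0) = _
  rw [shift_iter_apply]
  show Finv (2 * Real.pi * |((newAddr s A L j ε) (1 + q) : ℝ)| + 0) = _
  rw [newAddr]
  simp only [if_neg (by omega : ¬ (1 + q ≤ j))]
  rw [abs_eps_mul hε, Finv, cval, add_zero]

lemma main_construction (Q t : ℝ) (s : Addr) (hQ : 0 ≤ Q) (hx : (t, s) ∈ JQ Q)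
    (j : ℕ) (ε : ℤ) (hε : ε = 1 ∨ ε = -1) :
    ∃ s' : Addr, (∀ i, i ≤ j → s' i = s i) ∧
      (ε = 1 → s (j+1) < s' (j+1)) ∧ (ε = -1 → s' (j+1) < s (j+1)) ∧
      (tmin s', s') ∈ escEndF ∩ JQ Q ∧ t ≤ tmin s' ∧ tmin s' ≤ t + hIter j 8 := by
  obtain ⟨hJF, hu⟩ := hx
  set A := (Fmodel^[j] (t, s)).1 with hAdef
  have hA : 0 ≤ A := hJF j
  have hAQ : Q ≤ A := hu j
  set L := Real.log (1 + 2 * Real.pi * (|(s (j+1) : ℝ)| + 1)) with hLdef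
  have habs : (0:ℝ) ≤ |(s (j+1) : ℝ)| := abs_nonneg _
  have hpi := Real.pi_pos
  have hL : 0 ≤ L := Real.log_nonneg (by nlinarith)
  set s' := newAddr s A L j ε with hs'def
  have hagree : ∀ i, i ≤ j → s' i = s i := fun i hi => if_pos hi
  -- the (j+1)-st entry of s'
  have hj1 : s' (j+1) = ε * (Kf (thet A L 1) : ℤ) := by
    rw [hs'def, newAddr]
    simp only [if_neg (by omega : ¬ (j + 1 ≤ j))]
    have h2 : j + 1 - j = 1 := by omega
    rw [h2]
  -- the key size bound on the first new entry
  have hKfL : |(s (j+1) : ℝ)| + 1 ≤ (Kf (thet A L 1) : ℝ) := by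
    have h1 : L ≤ Real.log (1 + 2 * Real.pi * (Kf (thet A L 1) : ℝ)) :=
      le_trans (le_max_right _ _) (Kf_spec (thet A L 1))
    have hKnn : (0:ℝ) ≤ (Kf (thet A L 1) : ℝ) := Nat.cast_nonneg _
    have h2 : 1 + 2 * Real.pi * (|(s (j+1) : ℝ)| + 1) ≤
        1 + 2 * Real.pi * (Kf (thet A L 1) : ℝ) := by
      calc 1 + 2 * Real.pi * (|(s (j+1) : ℝ)| + 1)
          = Real.exp L := (Real.exp_log (by nlinarith)).symm
        _ ≤ Real.exp (Real.log (1 + 2 * Real.pi * (Kf (thet A L 1) : ℝ))) :=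
            Real.exp_le_exp.2 h1
        _ = _ := Real.exp_log (by nlinarith)
    nlinarith
  -- L ≤ A + 2
  have hLA : L ≤ A + 2 := by
    have h0 := hJF (j+1)
    rw [Function.iterate_succ_apply'] at h0
    simp only [Fmodel] at h0
    have h2 : (Fmodel^[j] (t,s)).2 1 = s (j+1) := by
      rw [iter_snd, shift_iter_apply]
      congr 1
      omega
    rw [h2, ← hAdef] at h0
    have h1 : 1 + 2 * Real.pi * |(s (j+1) : ℝ)| ≤ Real.exp A := by linarith
    have h3 : Real.log (1 + 2 * Real.pi * |(s (j+1) : ℝ)|) ≤ A := by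
      rw [Real.log_le_iff_le_exp (by nlinarith)]
      exact h1
    have h4 : 1 + 2 * Real.pi * (|(s (j+1) : ℝ)| + 1) ≤
        (1 + 2 * Real.pi * |(s (j+1) : ℝ)|) * (1 + 2 * Real.pi) := by
      nlinarith [mul_nonneg (mul_nonneg hpi.le hpi.le) habs]
    calc L ≤ Real.log ((1 + 2 * Real.pi * |(s (j+1) : ℝ)|) * (1 + 2 * Real.pi)) :=
          Real.log_le_log (by nlinarith) h4
      _ = Real.log (1 + 2 * Real.pi * |(s (j+1) : ℝ)|) + Real.log (1 + 2 * Real.pi) := by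
          rw [Real.log_mul (by nlinarith) (by nlinarith)]
      _ ≤ A + 2 := by
          have h5 : Real.log (1 + 2 * Real.pi) ≤ 2 := by
            rw [Real.log_le_iff_le_exp (by nlinarith)]
            exact one_add_two_pi_le
          linarith
  have hthet1 : thet A L 1 ≤ A + 5 := by
    rw [thet]
    apply max_le
    · push_cast; linarith
    · linarith
  -- pull bound for s'
  have h8 : (0:ℝ) ≤ hIter j 8 := hIter_nonneg j (by norm_num)
  have hpull_s : ∀ n, pull n s ≤ t := (JF_iff t s).1 hJF
  have hb : ∀ n, pull n s' ≤ t + hIter j 8 := by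
    intro n
    rcases le_or_gt n j with h | h
    · calc pull n s' = pull n s :=
            pullW_congr n s' s 0 (fun i _ hi' => hagree i (hi'.trans h))
        _ ≤ t := hpull_s n
        _ ≤ t + hIter j 8 := by linarith
    · obtain ⟨m, rfl⟩ : ∃ m, n = j + m := ⟨n - j, by omega⟩
      rw [pull, pullW_add j m s' 0,
        pullW_congr j s' s _ (fun i _ hi' => hagree i hi')]
      set w := pullW m (shift^[j] s') 0 with hwdef
      have hw0 : 0 ≤ w := pullW_nonneg _ _ _ le_rfl
      have hwle : w ≤ A + 8 := by
        have htp := tail_pull (s := s) (j := j) (ε := ε) hA hL hε m 0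
        have hc : cval A L 1 ≤ thet A L 1 + 2 := cval_le hA 1
        exact le_trans htp (by linarith)
      calc pullW j s w ≤ pullW j s (A + 8) := pullW_mono j s hw0 (by linarith)
        _ ≤ t + hIter j 8 := pullW_le_of_JF j t s hJF 8 (by norm_num)
  obtain ⟨hJF', hple, htle⟩ := endpoint_spec s' (t + hIter j 8) hb
  -- lower bound t ≤ tmin s'
  have hc1ge : A ≤ pull 1 (shift^[j] s') := by
    rw [pull_one_shift hε (by omega)]
    have h2 : 1 + j - j = 1 := by omega
    rw [h2]
    calc A ≤ A + 2*(1:ℕ) + 3 := by push_cast; linarith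
      _ ≤ thet A L 1 := thet_ge hA 1
      _ ≤ cval A L 1 := cval_ge 1
  have htmt : t ≤ tmin s' := by
    have h1 : pull (j+1) s' = pullW j s (pull 1 (shift^[j] s')) := by
      rw [pull, pullW_add j 1 s' 0,
        pullW_congr j s' s _ (fun i _ hi' => hagree i hi')]
      rfl
    have h3 : pullW j s A = t := pullW_orbit j t s
    calc t = pullW j s A := h3.symm
      _ ≤ pullW j s (pull 1 (shift^[j] s')) := pullW_mono j s hA hc1ge
      _ = pull (j+1) s' := h1.symm
      _ ≤ tmin s' := hple (j+1)
  -- orbit lower bounds at the endpoint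
  have hlate : ∀ k, j < k → A + 2*((1 + k - j : ℕ):ℝ) + 3 ≤ (Fmodel^[k] (tmin s', s')).1 := by
    intro k hk
    have hJFk := JF_iterate hJF' k
    have hsnd : (Fmodel^[k] (tmin s', s')).2 = shift^[k] s' := iter_snd k _ s'
    have hpair : Fmodel^[k] (tmin s', s') = ((Fmodel^[k] (tmin s', s')).1, shift^[k] s') := by
      rw [← hsnd]
    rw [hpair] at hJFk
    have h1 : pull 1 (shift^[k] s') ≤ (Fmodel^[k] (tmin s', s')).1 :=
      (JF_iff _ _).1 hJFk 1
    rw [pull_one_shift hε (by omega)] at h1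
    calc A + 2*((1 + k - j : ℕ):ℝ) + 3 ≤ thet A L (1 + k - j) := thet_ge hA _
      _ ≤ cval A L (1 + k - j) := cval_ge _
      _ ≤ _ := h1
  have horb : ∀ k, Q ≤ (Fmodel^[k] (tmin s', s')).1 := by
    intro k
    rcases le_or_gt k j with h | h
    · have e1 : (Fmodel^[k] (tmin s', s')).1 = (Fmodel^[k] (tmin s', s)).1 :=
        iter_congr k _ s' s (fun i _ hi' => hagree i (hi'.trans h))
      have e2 := iter_mono k t (tmin s') s htmt
      have e3 := hu k
      rw [e1]; linarith
    · have := hlate k h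
      have hcast : (0:ℝ) ≤ ((1 + k - j : ℕ):ℝ) := Nat.cast_nonneg _
      linarith
  have htend0 : Tendsto (fun k : ℕ => (k:ℝ) - j) atTop atTop := by
    have h := tendsto_atTop_add_const_right atTop (-(j:ℝ))
      (tendsto_natCast_atTop_atTop (R := ℝ))
    simpa [sub_eq_add_neg] using h
  have htend : Tendsto (fun k => (Fmodel^[k] (tmin s', s')).1) atTop atTop := by
    apply tendsto_atTop_mono' atTop ?_ htend0
    filter_upwards [eventually_ge_atTop (j+1)] with k hk
    have h1 := hlate k (by omega)
    have hcast : ((1 + k - j : ℕ):ℝ) = 1 + (k:ℝ) - (j:ℝ) := by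
      have hjk : j ≤ 1 + k := by omega
      push_cast [Nat.cast_sub hjk]
      ring
    rw [hcast] at h1
    have hkj : (j:ℝ) ≤ (k:ℝ) := by exact_mod_cast (by omega : j ≤ k)
    linarith
  -- assemble
  refine ⟨s', hagree, ?_, ?_, ⟨⟨s', ⟨⟨tmin s', hJF'⟩, hJF', htend⟩, rfl⟩, hJF', horb⟩,
    htmt, htle⟩
  · intro hε1
    subst hε1
    rw [hj1]
    have h1 : ((s (j+1) : ℝ)) < ((1 * (Kf (thet A L 1) : ℤ) : ℤ) : ℝ) := by
      push_cast
      have := le_abs_self ((s (j+1) : ℝ))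
      linarith
    exact_mod_cast h1
  · intro hε1
    subst hε1
    rw [hj1]
    have h1 : (((-1) * (Kf (thet A L 1) : ℤ) : ℤ) : ℝ) < ((s (j+1) : ℝ)) := by
      push_cast
      have := neg_abs_le ((s (j+1) : ℝ))
      linarith
    exact_mod_cast h1
end EDense

open EDense in
/-- **Escaping endpoints are densely approximated from both sides in `J_{≥Q}(𝓕)`.** Every
`x⁰ ∈ J_{≥Q}(𝓕)` is the limit of sequences in `Ẽ_{≥Q}(𝓕) = Ẽ(𝓕) ∩ J_{≥Q}(𝓕)` whose
addresses are lexicographically greater (resp. smaller) than that of `x⁰`. In particular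
`Ẽ_{≥Q}(𝓕)` is dense in `J_{≥Q}(𝓕)`. -/
theorem escaping_endpoints_dense_in_JQ (Q : ℝ) (hQ : 0 ≤ Q) :
    (∀ x0 ∈ JQ Q, ∃ xp xm : ℕ → ℝ × Addr,
      (∀ j : ℕ, xp j ∈ escEndF ∩ JQ Q ∧ xm j ∈ escEndF ∩ JQ Q ∧
        lexLt (xm j).2 x0.2 ∧ lexLt x0.2 (xp j).2) ∧
      Tendsto xp atTop (𝓝 x0) ∧ Tendsto xm atTop (𝓝 x0)) ∧
    JQ Q ⊆ closure (escEndF ∩ JQ Q) := by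
  have key : ∀ x0 ∈ JQ Q, ∃ xp xm : ℕ → ℝ × Addr,
      (∀ j : ℕ, xp j ∈ escEndF ∩ JQ Q ∧ xm j ∈ escEndF ∩ JQ Q ∧
        lexLt (xm j).2 x0.2 ∧ lexLt x0.2 (xp j).2) ∧
      Tendsto xp atTop (𝓝 x0) ∧ Tendsto xm atTop (𝓝 x0) := by
    rintro ⟨t, s⟩ hx
    choose sp hsp1 hsp2 hsp3 hsp4 hsp5 hsp6 using
      fun j => main_construction Q t s hQ hx j 1 (Or.inl rfl)
    choose sm hsm1 hsm2 hsm3 hsm4 hsm5 hsm6 using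
      fun j => main_construction Q t s hQ hx j (-1) (Or.inr rfl)
    have haddr : ∀ (f : ℕ → Addr), (∀ j i, i ≤ j → f j i = s i) →
        Tendsto (fun j => f j) atTop (𝓝 s) := by
      intro f hf
      rw [tendsto_pi_nhds]
      intro i
      apply Tendsto.congr' ?_ (tendsto_const_nhds (x := s i))
      filter_upwards [eventually_ge_atTop i] with j hj
      exact (hf j i hj).symm
    have hfst : ∀ (f : ℕ → Addr), (∀ j, t ≤ tmin (f j)) → (∀ j, tmin (f j) ≤ t + hIter j 8) →
        Tendsto (fun j => tmin (f j)) atTop (𝓝 t) := by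
      intro f hlo hhi
      have hupper : Tendsto (fun j => t + hIter j 8) atTop (𝓝 t) := by
        have := tendsto_const_nhds (x := t) (f := atTop (α := ℕ)) |>.add
          (hIter_tendsto (by norm_num : (0:ℝ) ≤ 8))
        simpa using this
      exact tendsto_of_tendsto_of_tendsto_of_le_of_le tendsto_const_nhds hupper hlo hhi
    refine ⟨fun j => (tmin (sp j), sp j), fun j => (tmin (sm j), sm j), ?_, ?_, ?_⟩
    · intro j
      refine ⟨hsp4 j, hsm4 j, ?_, ?_⟩
      · exact ⟨j+1, fun m hm => hsm1 j m (by omega), hsm3 j rfl⟩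
      · exact ⟨j+1, fun m hm => (hsp1 j m (by omega)).symm, hsp2 j rfl⟩
    · exact Filter.Tendsto.prodMk_nhds (hfst sp hsp5 hsp6) (haddr sp hsp1)
    · exact Filter.Tendsto.prodMk_nhds (hfst sm hsm5 hsm6) (haddr sm hsm1)
  refine ⟨key, fun x0 hx0 => ?_⟩
  obtain ⟨xp, xm, h1, h2, h3⟩ := key x0 hx0
  exact mem_closure_of_tendsto h2 (Filter.Eventually.of_forall fun j => (h1 j).1)

end
end
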